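/- arXiv:1612.06489 — 7 statements merged into one kernel-verified Lean document; each statement's English description precedes it below -/
import Mathlib

section
/- Let H be a real Hilbert space, V a proper closed subspace with finite-dimensional orthogonal complement V⊥, and B : H × H → H a continuous symmetric bilinear map whose range is contained in V; set Q(u) := B(u,u). Let ū ∈ H satisfy Q(ū) = 0, and let L := 2B(ū, ·) : H → H (the Fréchet derivative of Q at ū). Assume L vanishes on V⊥ and that there is δ > 0 with ⟨L v, v⟩ ≤ −δ‖v‖² for all v ∈ V. Then there exist open neighborhoods U of 0 in V⊥ and W of 0 in V and a C^∞ map v* : U → V with v*(0) = 0 and Dv*(0) = 0 such that for all z ∈ U and w ∈ W: Q(ū + z + w) = 0 if and only if w = v*(z). Moreover, for any bounded linear A : H → H, the map f*(z) := P_{V⊥}(A(ū + z + v*(z))) is C^∞ on U with Df*(0) = P_{V⊥} ∘ A restricted to V⊥. -/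
open Filter

set_option synthInstance.maxHeartbeats 1000000
set_option maxHeartbeats 2000000

/-- **Equilibrium manifold as a smooth graph (Chapman–Enskog expansion).**
Near an equilibrium `ū` of `Q(u) = B(u,u)`, with `L = 2B(ū,·)` vanishing on `V⊥` and
negative definite on `V`, the zero set of `Q` is locally the graph of a `C^∞` map
`v* : V⊥ → V` with `v*(0) = 0`, `Dv*(0) = 0`; moreover for any bounded `A` the map
`f*(z) = P_{V⊥}(A(ū + z + v*(z)))` is `C^∞` with `Df*(0) = P_{V⊥} ∘ A |_{V⊥}`. -/
theorem equilibrium_manifold_graph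
    {H : Type*} [NormedAddCommGroup H] [InnerProductSpace ℝ H] [CompleteSpace H]
    (V : Submodule ℝ H) (hVclosed : IsClosed (V : Set H)) (hVproper : V ≠ ⊤)
    [FiniteDimensional ℝ ↥Vᗮ]
    (B : H →L[ℝ] H →L[ℝ] H) (hBsymm : ∀ x y : H, B x y = B y x)
    (hBrange : ∀ x y : H, B x y ∈ V)
    (ubar : H) (hubar : B ubar ubar = 0)
    (δ : ℝ) (hδ : 0 < δ)
    (hLker : ∀ z : H, z ∈ Vᗮ → (2 : ℝ) • B ubar z = 0)
    (hLneg : ∀ v : H, v ∈ V → inner ℝ ((2 : ℝ) • B ubar v) v ≤ -δ * ‖v‖ ^ 2) :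
    ∃ (U : Set ↥Vᗮ) (W : Set ↥V), IsOpen U ∧ IsOpen W ∧ (0 : ↥Vᗮ) ∈ U ∧ (0 : ↥V) ∈ W ∧
      ∃ vstar : ↥Vᗮ → ↥V,
        ContDiffOn ℝ (⊤ : ℕ∞) vstar U ∧ vstar 0 = 0 ∧ fderiv ℝ vstar 0 = 0 ∧
        (∀ z ∈ U, ∀ w ∈ W,
          (B (ubar + (z : H) + (w : H)) (ubar + (z : H) + (w : H)) = 0 ↔ w = vstar z)) ∧
        ∀ A : H →L[ℝ] H,
          ContDiffOn ℝ (⊤ : ℕ∞)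
            (fun z : ↥Vᗮ =>
              Submodule.orthogonalProjection Vᗮ (A (ubar + (z : H) + (vstar z : H)))) U ∧
          fderiv ℝ
            (fun z : ↥Vᗮ =>
              Submodule.orthogonalProjection Vᗮ (A (ubar + (z : H) + (vstar z : H)))) 0 =
            (Submodule.orthogonalProjection Vᗮ).comp (A.comp Vᗮ.subtypeL) := by
  classical
  haveI : CompleteSpace ↥V := hVclosed.completeSpace_coe
  set PV := Submodule.orthogonalProjection V with hPVdef
  -- B ubar vanishes on Vᗮ
  have hBu0 : ∀ z : H, z ∈ Vᗮ → B ubar z = 0 := by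
    intro z hz
    have h := hLker z hz
    rcases smul_eq_zero.mp h with h' | h'
    · norm_num at h'
    · exact h'
  -- the inclusion of the product into H
  set ι : (↥Vᗮ × ↥V) →L[ℝ] H :=
      Vᗮ.subtypeL.comp (ContinuousLinearMap.fst ℝ ↥Vᗮ ↥V) +
      V.subtypeL.comp (ContinuousLinearMap.snd ℝ ↥Vᗮ ↥V) with hιdef
  have hιapp : ∀ p : ↥Vᗮ × ↥V, ι p = (p.1 : H) + (p.2 : H) := fun p => rfl
  set u : (↥Vᗮ × ↥V) → H := fun p => ubar + ι p with hudef
  have hu00 : u (0, 0) = ubar := by simp [hudef, hιapp]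
  -- the derivative family
  set D : H →L[ℝ] H →L[ℝ] H := B + B.flip with hDdef
  have hDapp : ∀ x y : H, D x y = B x y + B y x := fun x y => rfl
  set T : (↥Vᗮ × ↥V) → (↥V →L[ℝ] ↥V) :=
      fun p => PV.comp ((D (u p)).comp V.subtypeL) with hTdef
  set C : (↥Vᗮ × ↥V) → (↥Vᗮ →L[ℝ] ↥V) :=
      fun p => PV.comp ((D (u p)).comp Vᗮ.subtypeL) with hCdef
  set Φ : (↥Vᗮ × ↥V) → (↥Vᗮ × ↥V) := fun p => (p.1, PV (B (u p) (u p))) with hΦdef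
  have hΦ0 : Φ (0, 0) = (0, 0) := by
    have h1 : B (u (0, 0)) (u (0, 0)) = 0 := by rw [hu00]; exact hubar
    show ((0 : ↥Vᗮ), PV (B (u (0, 0)) (u (0, 0)))) = (0, 0)
    rw [h1, map_zero]
  -- Φ is smooth (analytic)
  have hucont : Continuous u := continuous_const.add ι.continuous
  have husm : ContDiff ℝ (⊤ : ℕ∞) u := contDiff_const.add ι.contDiff
  have hQsm : ContDiff ℝ (⊤ : ℕ∞) (fun y : H => B y y) :=
    (B.isBoundedBilinearMap.contDiff).comp (contDiff_id.prodMk contDiff_id)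
  have hΦsm : ContDiff ℝ (⊤ : ℕ∞) Φ :=
    contDiff_fst.prodMk (PV.contDiff.comp (hQsm.comp husm))
  -- derivative of y ↦ B y y
  have hQder : ∀ x : H, HasFDerivAt (fun y : H => B y y) (D x) x := by
    intro x
    have hdiag : HasFDerivAt (fun y : H => (y, y))
        ((ContinuousLinearMap.id ℝ H).prod (ContinuousLinearMap.id ℝ H)) x :=
      HasFDerivAt.prodMk (hasFDerivAt_id x) (hasFDerivAt_id x)
    have h1 := HasFDerivAt.comp (f := fun y : H => (y, y)) x
      (B.isBoundedBilinearMap.hasFDerivAt (x, x)) hdiag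
    convert h1 using 1
    · rfl
    all_goals
      refine ContinuousLinearMap.ext fun y => ?_
      simp [hDapp, IsBoundedBilinearMap.deriv_apply]
  -- derivative of Φ
  have hΦder : ∀ p : ↥Vᗮ × ↥V,
      HasFDerivAt Φ ((ContinuousLinearMap.fst ℝ ↥Vᗮ ↥V).prod
        (PV.comp ((D (u p)).comp ι))) p := by
    intro p
    have hu' : HasFDerivAt u ι p := ι.hasFDerivAt.const_add ubar
    have h1 : HasFDerivAt (fun q => B (u q) (u q)) ((D (u p)).comp ι) p :=
      (hQder (u p)).comp p hu'
    exact HasFDerivAt.prodMk hasFDerivAt_fst (PV.hasFDerivAt.comp p h1)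
  -- for p with T p invertible, Φ has invertible derivative at p
  have key : ∀ p : ↥Vᗮ × ↥V, ∀ e' : ↥V ≃L[ℝ] ↥V, (e' : ↥V →L[ℝ] ↥V) = T p →
      HasFDerivAt Φ
        (((ContinuousLinearEquiv.refl ℝ ↥Vᗮ).skewProd e' (C p) :
          (↥Vᗮ × ↥V) ≃L[ℝ] (↥Vᗮ × ↥V)) : (↥Vᗮ × ↥V) →L[ℝ] (↥Vᗮ × ↥V)) p := by
    intro p e' he'
    have hco : (((ContinuousLinearEquiv.refl ℝ ↥Vᗮ).skewProd e' (C p)) :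
        (↥Vᗮ × ↥V) →L[ℝ] (↥Vᗮ × ↥V)) =
        (ContinuousLinearMap.fst ℝ ↥Vᗮ ↥V).prod (PV.comp ((D (u p)).comp ι)) := by
      refine ContinuousLinearMap.ext fun q => ?_
      have h2 : e' q.2 = T p q.2 := by rw [← he']; rfl
      refine Prod.ext rfl ?_
      show e' q.2 + C p q.1 = PV (D (u p) (ι q))
      rw [h2, hιapp, map_add, map_add]
      simp only [hTdef, hCdef]
      rw [add_comm]
      rfl
    rw [hco]
    exact hΦder p
  -- T is continuous
  have hTcont : Continuous T := by
    have h1 : Continuous fun p => D (u p) := D.continuous.comp hucont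
    exact (h1.clm_comp_const V.subtypeL).const_clm_comp PV
  -- T (0,0) is invertible via Lax–Milgram
  have hT0app : ∀ w : ↥V, (T (0, 0) w : H) = (2 : ℝ) • B ubar (w : H) := by
    intro w
    have hmem : (2 : ℝ) • B ubar (w : H) ∈ V := V.smul_mem _ (hBrange _ _)
    have : D (u (0, 0)) (w : H) = (2 : ℝ) • B ubar (w : H) := by
      rw [hu00, hDapp, ← hBsymm ubar (w : H), two_smul]
    show (PV (D (u (0, 0)) (w : H)) : H) = _
    rw [this]
    exact Submodule.starProjection_eq_self_iff.mpr hmem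
  set N : ↥V →L[ℝ] ↥V := -(T (0, 0)) with hNdef
  set bform : ↥V →L[ℝ] ↥V →L[ℝ] ℝ :=
      ((isBoundedBilinearMap_inner (𝕜 := ℝ) (E := ↥V)).toContinuousLinearMap).comp N
      with hbformdef
  have hbformapp : ∀ v w : ↥V, bform v w = inner ℝ (N v) w := fun v w => rfl
  have hcoercive : IsCoercive bform := by
    refine ⟨δ, hδ, fun v => ?_⟩
    have h1 : bform v v = -(inner ℝ ((2 : ℝ) • B ubar (v : H)) (v : H) : ℝ) := by
      rw [hbformapp]
      have : ((N v : ↥V) : H) = -((2 : ℝ) • B ubar (v : H)) := by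
        show ((-(T (0,0) v) : ↥V) : H) = _
        rw [Submodule.coe_neg, hT0app]
      rw [Submodule.coe_inner, this, inner_neg_left]
    have h2 := hLneg (v : H) v.2
    have h3 : δ * ‖v‖ * ‖v‖ = -(-δ * ‖(v : H)‖ ^ 2) := by
      rw [Submodule.coe_norm]; ring
    rw [h1, h3]
    exact neg_le_neg h2
  have hNeq : (hcoercive.continuousLinearEquivOfBilin : ↥V →L[ℝ] ↥V) = N :=
    ContinuousLinearMap.ext fun v =>
      (hcoercive.unique_continuousLinearEquivOfBilin (fun w => (hbformapp v w).symm)).symm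
  -- the invertible derivative at 0
  set e0' : ↥V ≃L[ℝ] ↥V :=
      hcoercive.continuousLinearEquivOfBilin.trans (ContinuousLinearEquiv.neg ℝ) with he0'def
  have he0'coe : (e0' : ↥V →L[ℝ] ↥V) = T (0, 0) := by
    refine ContinuousLinearMap.ext fun v => ?_
    show -(hcoercive.continuousLinearEquivOfBilin v) = T (0, 0) v
    have h1 : hcoercive.continuousLinearEquivOfBilin v = N v := by rw [← hNeq]; rfl
    rw [h1, hNdef]
    simp
  set e0 : (↥Vᗮ × ↥V) ≃L[ℝ] (↥Vᗮ × ↥V) :=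
      (ContinuousLinearEquiv.refl ℝ ↥Vᗮ).skewProd e0' (C (0, 0)) with he0def
  have he0fd : HasFDerivAt Φ (e0 : (↥Vᗮ × ↥V) →L[ℝ] (↥Vᗮ × ↥V)) (0, 0) :=
    key (0, 0) e0' he0'coe
  have hstrict : HasStrictFDerivAt Φ (e0 : (↥Vᗮ × ↥V) →L[ℝ] (↥Vᗮ × ↥V)) (0, 0) :=
    hΦsm.contDiffAt.hasStrictFDerivAt' he0fd (by simp)
  -- the local homeomorphism and its inverse
  set Φh := hstrict.toOpenPartialHomeomorph Φ with hΦhdef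
  have hΦhcoe : ⇑Φh = Φ := rfl
  have hsrc : (0, 0) ∈ Φh.source := hstrict.mem_toOpenPartialHomeomorph_source
  have htgt : (0, 0) ∈ Φh.target := by
    have := hstrict.image_mem_toOpenPartialHomeomorph_target
    rwa [hΦ0] at this
  set g := Φh.symm with hgdef
  have hgΦ : ∀ p ∈ Φh.source, g (Φ p) = p := fun p hp => Φh.left_inv hp
  have hΦg : ∀ y ∈ Φh.target, Φ (g y) = y := fun y hy => Φh.right_inv hy
  have hg0 : g (0, 0) = (0, 0) := by
    have := hgΦ (0, 0) hsrc
    rwa [hΦ0] at this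
  -- the open set where T is invertible
  set S : Set (↥Vᗮ × ↥V) :=
      T ⁻¹' (Set.range ((↑) : (↥V ≃L[ℝ] ↥V) → ↥V →L[ℝ] ↥V)) with hSdef
  have hSopen : IsOpen S := ContinuousLinearEquiv.isOpen.preimage hTcont
  have h0S : (0, 0) ∈ S := ⟨e0', he0'coe⟩
  -- g is smooth on t₁
  set t₁ : Set (↥Vᗮ × ↥V) := Φh.target ∩ g ⁻¹' S with ht₁def
  have ht₁open : IsOpen t₁ := Φh.isOpen_inter_preimage_symm hSopen
  have h0t₁ : (0, 0) ∈ t₁ := ⟨htgt, by rw [Set.mem_preimage, hg0]; exact h0S⟩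
  have hgsm : ∀ a ∈ t₁, ContDiffAt ℝ (⊤ : ℕ∞) g a := by
    rintro a ⟨hat, haS⟩
    obtain ⟨ea, hea⟩ := haS
    exact Φh.contDiffAt_symm hat (key (g a) ea hea) hΦsm.contDiffAt
  -- the first neighborhood in Vᗮ
  set U0 : Set ↥Vᗮ := {z | ((z, (0 : ↥V)) : ↥Vᗮ × ↥V) ∈ t₁} with hU0def
  have hU0open : IsOpen U0 :=
    ht₁open.preimage (continuous_id.prodMk continuous_const)
  have h0U0 : (0 : ↥Vᗮ) ∈ U0 := h0t₁
  -- the implicit function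
  set vstar : ↥Vᗮ → ↥V := fun z => (g (z, 0)).2 with hvstardef
  have hvstar0 : vstar 0 = 0 := by
    show (g (0, 0)).2 = 0
    rw [hg0]
  have hgfst : ∀ y ∈ Φh.target, (g y).1 = y.1 := by
    intro y hy
    have h := congrArg Prod.fst (hΦg y hy)
    exact h
  have hgzw : ∀ z ∈ U0, g (z, 0) = (z, vstar z) := by
    intro z hz
    exact Prod.ext (hgfst (z, 0) hz.1) rfl
  -- smoothness of vstar on U0
  have hvsmU0 : ∀ z ∈ U0, ContDiffAt ℝ (⊤ : ℕ∞) vstar z := by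
    intro z hz
    have h1 : ContDiffAt ℝ (⊤ : ℕ∞) (fun z : ↥Vᗮ => ((z, 0) : ↥Vᗮ × ↥V)) z :=
      (contDiff_id.prodMk contDiff_const).contDiffAt
    have h2 : ContDiffAt ℝ (⊤ : ℕ∞) g (z, 0) := hgsm (z, 0) hz
    exact (contDiff_snd.contDiffAt.comp z (h2.comp z h1) : _)
  -- derivative of vstar at 0
  have hC0 : C (0, 0) = 0 := by
    refine ContinuousLinearMap.ext fun a => ?_
    have h1 : D (u (0, 0)) (a : H) = 0 := by
      rw [hu00, hDapp, ← hBsymm ubar (a : H), hBu0 (a : H) a.2, add_zero]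
    show PV (D (u (0, 0)) (a : H)) = 0
    rw [h1, map_zero]
  have hginv : HasStrictFDerivAt g
      ((e0.symm : (↥Vᗮ × ↥V) →L[ℝ] (↥Vᗮ × ↥V))) (0, 0) := by
    have := hstrict.to_localInverse
    rwa [hΦ0] at this
  have hvfd : HasFDerivAt vstar (0 : ↥Vᗮ →L[ℝ] ↥V) 0 := by
    have hins : HasFDerivAt (fun z : ↥Vᗮ => ((z, 0) : ↥Vᗮ × ↥V))
        (ContinuousLinearMap.inl ℝ ↥Vᗮ ↥V) 0 := (ContinuousLinearMap.inl ℝ ↥Vᗮ ↥V).hasFDerivAt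
    have h1 : HasFDerivAt (fun z : ↥Vᗮ => g (z, 0))
        ((e0.symm : (↥Vᗮ × ↥V) →L[ℝ] (↥Vᗮ × ↥V)).comp (ContinuousLinearMap.inl ℝ ↥Vᗮ ↥V)) 0 :=
      HasFDerivAt.comp (f := fun z : ↥Vᗮ => ((z, 0) : ↥Vᗮ × ↥V)) 0 hginv.hasFDerivAt hins
    have h2 : HasFDerivAt vstar
        ((ContinuousLinearMap.snd ℝ ↥Vᗮ ↥V).comp
          ((e0.symm : (↥Vᗮ × ↥V) →L[ℝ] (↥Vᗮ × ↥V)).comp (ContinuousLinearMap.inl ℝ ↥Vᗮ ↥V))) 0 :=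
      HasFDerivAt.comp (f := fun z : ↥Vᗮ => g (z, 0)) 0
        (ContinuousLinearMap.snd ℝ ↥Vᗮ ↥V).hasFDerivAt h1
    have h3 : ((ContinuousLinearMap.snd ℝ ↥Vᗮ ↥V).comp
        ((e0.symm : (↥Vᗮ × ↥V) →L[ℝ] (↥Vᗮ × ↥V)).comp (ContinuousLinearMap.inl ℝ ↥Vᗮ ↥V))) =
        (0 : ↥Vᗮ →L[ℝ] ↥V) := by
      refine ContinuousLinearMap.ext fun z => ?_
      show (e0.symm ((z, 0) : ↥Vᗮ × ↥V)).2 = (0 : ↥V)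
      rw [he0def, ContinuousLinearEquiv.skewProd_symm_apply]
      have hC0' : C 0 = 0 := hC0
      simp [hC0, hC0']
    rw [h3] at h2
    exact h2
  have hvfderiv : fderiv ℝ vstar 0 = 0 := hvfd.fderiv
  -- choose the product neighborhood inside the source
  obtain ⟨u1, w1, hu1open, hw1open, h0u1, h0w1, huw⟩ :=
    isOpen_prod_iff.mp Φh.open_source 0 0 hsrc
  refine ⟨U0 ∩ u1, w1, hU0open.inter hu1open, hw1open, ⟨h0U0, h0u1⟩, h0w1, vstar,
    ?_, hvstar0, hvfderiv, ?_, ?_⟩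
  · exact fun z hz => (hvsmU0 z hz.1).contDiffWithinAt
  · -- the characterization of the zero set
    intro z hz w hw
    have hzU0 : z ∈ U0 := hz.1
    have hmem : ((z, w) : ↥Vᗮ × ↥V) ∈ Φh.source := huw ⟨hz.2, hw⟩
    have htz : ((z, (0 : ↥V)) : ↥Vᗮ × ↥V) ∈ Φh.target := hzU0.1
    have huzw : u (z, w) = ubar + (z : H) + (w : H) := by
      rw [hudef]; simp only [hιapp]; rw [add_assoc]
    constructor
    · intro h
      have hΦzw : Φ (z, w) = (z, 0) := by
        rw [hΦdef]
        simp only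
        rw [huzw, h, map_zero]
      have := hgΦ (z, w) hmem
      rw [hΦzw, hgzw z hzU0] at this
      exact (congrArg Prod.snd this).symm
    · intro h
      have hgz : g (z, 0) = (z, w) := by rw [hgzw z hzU0, h]
      have hΦzw : Φ (z, w) = (z, 0) := by
        rw [← hgz, hΦg (z, 0) htz]
      have h2 : PV (B (u (z, w)) (u (z, w))) = 0 := congrArg Prod.snd hΦzw
      have h3 : (PV (B (u (z, w)) (u (z, w))) : H) = B (u (z, w)) (u (z, w)) :=
        Submodule.starProjection_eq_self_iff.mpr (hBrange _ _)
      rw [h2] at h3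
      rw [← huzw, ← h3]
      rfl
  · -- the Chapman–Enskog flux
    intro A
    constructor
    · have hbase : ContDiffOn ℝ (⊤ : ℕ∞) (fun z : ↥Vᗮ => (ubar + (z : H) + (vstar z : H))) (U0 ∩ u1) := by
        have h1 : ContDiff ℝ (⊤ : ℕ∞) (fun z : ↥Vᗮ => (ubar + (z : H))) :=
          contDiff_const.add Vᗮ.subtypeL.contDiff
        have h2 : ContDiffOn ℝ (⊤ : ℕ∞) (fun z : ↥Vᗮ => ((vstar z : H))) (U0 ∩ u1) := by
          apply V.subtypeL.contDiff.comp_contDiffOn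
          exact fun z hz => (hvsmU0 z hz.1).contDiffWithinAt
        exact h1.contDiffOn.add h2
      exact ((Submodule.orthogonalProjection Vᗮ).comp A).contDiff.comp_contDiffOn hbase
    · have hb1 : HasFDerivAt (fun z : ↥Vᗮ => (ubar + (z : H))) Vᗮ.subtypeL 0 :=
        Vᗮ.subtypeL.hasFDerivAt.const_add ubar
      have hb2 : HasFDerivAt (fun z : ↥Vᗮ => ((vstar z : H))) (0 : ↥Vᗮ →L[ℝ] H) 0 := by
        have := V.subtypeL.hasFDerivAt.comp 0 hvfd
        rwa [ContinuousLinearMap.comp_zero] at this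
      have hbase : HasFDerivAt (fun z : ↥Vᗮ => (ubar + (z : H) + (vstar z : H)))
          Vᗮ.subtypeL 0 := by
        have := hb1.add hb2
        rwa [add_zero] at this
      have hfd : HasFDerivAt
          (fun z : ↥Vᗮ => Submodule.orthogonalProjection Vᗮ (A (ubar + (z : H) + (vstar z : H))))
          (((Submodule.orthogonalProjection Vᗮ).comp A).comp Vᗮ.subtypeL) 0 :=
        ((Submodule.orthogonalProjection Vᗮ).comp A).hasFDerivAt.comp 0 hbase
      rw [hfd.fderiv]
      ext z
      rfl
end

section
/- Let H be a real Hilbert space, V a closed subspace with finite-dimensional orthogonal complement V⊥, and A : H → H a bounded self-adjoint injective linear operator. Let E : V → V be a bounded self-adjoint operator with ⟨E v, v⟩ ≤ −δ‖v‖² for all v ∈ V and some δ > 0. Define A11 := P_{V⊥} ∘ A restricted to V⊥ (an operator V⊥ → V⊥), A12 := P_{V⊥} ∘ A restricted to V (an operator V → V⊥), and D* := A12 ∘ (−E)^{−1} ∘ A12* : V⊥ → V⊥. Then D* is self-adjoint and positive semidefinite, and for every nonzero r ∈ ker A11 one has ⟨r, D* r⟩ > 0. -/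
/-!
Let `S` be a right inverse of `-E`. Coercivity of `-E` gives `⟪S w, w⟫ = ⟪-E (S w), S w⟫ ≥ δ ‖S w‖²`, so `S` is a
positive operator, strictly positive off `0`, and hence so is its congruence `D* = A12 S A12*`, with
`⟪r, D* r⟫ = ⟪A12* r, S (A12* r)⟫`. If `r ∈ V⊥` lies in `ker A11`, then `A r` has no `V⊥`-component;
since `A12* r = P_V (A r)` is its `V`-component, `A12* r = 0` would force `A r = 0`, so `r = 0` by
injectivity of `A`.
-/

open ContinuousLinearMap

theorem IsSelfAdjoint.of_mul_eq_one {R : Type*} [Monoid R] [StarMul R] {a b : R}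
    (ha : IsSelfAdjoint a) (h : a * b = 1) : IsSelfAdjoint b := by
  have h' : star b * a = 1 := by
    rw [← ha.star_eq, ← star_mul, h, star_one]
  exact left_inv_eq_right_inv h' h

namespace Submodule

variable {𝕜 E : Type*} [RCLike 𝕜] [NormedAddCommGroup E] [InnerProductSpace 𝕜 E]

theorem eq_zero_of_orthogonalProjectionOnto_eq_zero (U : Submodule 𝕜 E) [U.HasOrthogonalProjection]
    {x : E} (hU : U.orthogonalProjectionOnto x = 0) (hUperp : Uᗮ.orthogonalProjectionOnto x = 0) :
    x = 0 := by
  rw [orthogonalProjectionOnto_eq_zero_iff] at hU hUperp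
  rw [← mem_bot 𝕜, ← Uᗮ.inf_orthogonal_eq_bot]
  exact ⟨hU, hUperp⟩

theorem adjoint_orthogonalProjectionOnto_comp_comp_subtypeL [CompleteSpace E]
    (U W : Submodule 𝕜 E) [CompleteSpace U] [CompleteSpace W] (A : E →L[𝕜] E) :
    adjoint (W.orthogonalProjectionOnto ∘L A ∘L U.subtypeL) =
      U.orthogonalProjectionOnto ∘L adjoint A ∘L W.subtypeL := by
  rw [adjoint_comp, adjoint_comp, U.adjoint_subtypeL, W.adjoint_orthogonalProjectionOnto,
    comp_assoc]

end Submodule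

namespace ContinuousLinearMap

variable {F G : Type*} [NormedAddCommGroup F] [InnerProductSpace ℝ F]
  [NormedAddCommGroup G] [InnerProductSpace ℝ G]

section Coercive

variable {T S : F →L[ℝ] F} {c : ℝ}

theorem mul_norm_sq_le_inner_of_mul_eq_one (hT : ∀ v, c * ‖v‖ ^ 2 ≤ inner ℝ (T v) v)
    (h : T * S = 1) (w : F) : c * ‖S w‖ ^ 2 ≤ inner ℝ (S w) w := by
  have hw : T (S w) = w := by simpa using congr($h w)
  calc c * ‖S w‖ ^ 2 ≤ inner ℝ (T (S w)) (S w) := hT (S w)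
    _ = inner ℝ (S w) w := by rw [hw, real_inner_comm]

theorem isPositive_of_coercive_of_mul_eq_one [CompleteSpace F] (hTsa : IsSelfAdjoint T)
    (hc : 0 ≤ c) (hT : ∀ v, c * ‖v‖ ^ 2 ≤ inner ℝ (T v) v) (h : T * S = 1) : S.IsPositive :=
  (isPositive_iff' S).mpr ⟨hTsa.of_mul_eq_one h, fun w =>
    (by positivity : 0 ≤ c * ‖S w‖ ^ 2).trans (mul_norm_sq_le_inner_of_mul_eq_one hT h w)⟩

theorem inner_pos_of_coercive_of_mul_eq_one (hc : 0 < c)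
    (hT : ∀ v, c * ‖v‖ ^ 2 ≤ inner ℝ (T v) v) (h : T * S = 1) {w : F} (hw : w ≠ 0) :
    0 < inner ℝ w (S w) := by
  have hSw : S w ≠ 0 := fun h0 => hw (by simpa [h0] using congr($h w).symm)
  rw [real_inner_comm]
  exact (by positivity : 0 < c * ‖S w‖ ^ 2).trans_le (mul_norm_sq_le_inner_of_mul_eq_one hT h w)

end Coercive

theorem inner_comp_comp_adjoint_apply [CompleteSpace F] [CompleteSpace G] (B : F →L[ℝ] G)
    (T : F →L[ℝ] F) (r : G) :
    inner ℝ r ((B ∘L T ∘L adjoint B) r) = inner ℝ (adjoint B r) (T (adjoint B r)) :=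
  (adjoint_inner_left B _ r).symm

end ContinuousLinearMap

theorem stable_viscosity_general
    {H : Type*} [NormedAddCommGroup H] [InnerProductSpace ℝ H] [CompleteSpace H]
    (V : Submodule ℝ H) [CompleteSpace ↥V]
    (A : H →L[ℝ] H) (hA : IsSelfAdjoint A) (hAinj : Function.Injective A)
    (E : ↥V →L[ℝ] ↥V) (hE : IsSelfAdjoint E)
    (δ : ℝ) (hδ : 0 < δ) (hEneg : ∀ v : ↥V, inner ℝ (E v) v ≤ -δ * ‖v‖ ^ 2)
    (Einv : ↥V →L[ℝ] ↥V) (hEinv₁ : (-E).comp Einv = 1)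
    (A11 : ↥Vᗮ →L[ℝ] ↥Vᗮ)
    (hA11 : A11 = (Vᗮ.orthogonalProjectionOnto).comp (A.comp Vᗮ.subtypeL))
    (A12 : ↥V →L[ℝ] ↥Vᗮ)
    (hA12 : A12 = (Vᗮ.orthogonalProjectionOnto).comp (A.comp V.subtypeL))
    (Dstar : ↥Vᗮ →L[ℝ] ↥Vᗮ)
    (hDstar : Dstar = A12.comp (Einv.comp (ContinuousLinearMap.adjoint A12))) :
    IsSelfAdjoint Dstar ∧ (∀ r : ↥Vᗮ, (0 : ℝ) ≤ inner ℝ r (Dstar r)) ∧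
      ∀ r : ↥Vᗮ, r ∈ LinearMap.ker (A11 : ↥Vᗮ →ₗ[ℝ] ↥Vᗮ) → r ≠ 0 → (0 : ℝ) < inner ℝ r (Dstar r) := by
  have hcoer : ∀ v, δ * ‖v‖ ^ 2 ≤ inner ℝ ((-E) v) v := fun v => by
    rw [neg_apply, inner_neg_left]
    linarith [hEneg v]
  have hDpos : Dstar.IsPositive := hDstar ▸
    (isPositive_of_coercive_of_mul_eq_one hE.neg hδ.le hcoer hEinv₁).conj_adjoint A12
  refine ⟨hDpos.isSelfAdjoint, hDpos.inner_nonneg_right, fun r hr hr0 => ?_⟩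
  have hA12r : adjoint A12 r ≠ 0 := by
    intro h0
    rw [hA12, V.adjoint_orthogonalProjectionOnto_comp_comp_subtypeL, hA.adjoint_eq] at h0
    rw [LinearMap.mem_ker, hA11] at hr
    have hAr : A r = 0 := V.eq_zero_of_orthogonalProjectionOnto_eq_zero (by simpa using h0)
      (by simpa using hr)
    exact hr0 (by simpa using hAinj (hAr.trans (map_zero A).symm))
  rw [hDstar, inner_comp_comp_adjoint_apply]
  exact inner_pos_of_coercive_of_mul_eq_one hδ hcoer hEinv₁ hA12r

/-- **Stable viscosity property of the Chapman–Enskog diffusion operator.**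
With `A` bounded self-adjoint injective, `E` self-adjoint negative definite on `V`,
`A11 = P_{V⊥} A |_{V⊥}`, `A12 = P_{V⊥} A |_V` and `D* = A12 (−E)⁻¹ A12*`, the operator
`D*` is self-adjoint positive semidefinite, and `⟨r, D* r⟩ > 0` for `0 ≠ r ∈ ker A11`. -/
theorem stable_viscosity
    {H : Type*} [NormedAddCommGroup H] [InnerProductSpace ℝ H] [CompleteSpace H]
    (V : Submodule ℝ H) (hVclosed : IsClosed (V : Set H)) [CompleteSpace ↥V]
    [FiniteDimensional ℝ ↥Vᗮ]
    (A : H →L[ℝ] H) (hA : IsSelfAdjoint A) (hAinj : Function.Injective A)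
    (E : ↥V →L[ℝ] ↥V) (hE : IsSelfAdjoint E)
    (δ : ℝ) (hδ : 0 < δ) (hEneg : ∀ v : ↥V, inner ℝ (E v) v ≤ -δ * ‖v‖ ^ 2)
    (Einv : ↥V →L[ℝ] ↥V) (hEinv₁ : (-E).comp Einv = 1) (hEinv₂ : Einv.comp (-E) = 1)
    (A11 : ↥Vᗮ →L[ℝ] ↥Vᗮ)
    (hA11 : A11 = (Vᗮ.orthogonalProjectionOnto).comp (A.comp Vᗮ.subtypeL))
    (A12 : ↥V →L[ℝ] ↥Vᗮ)
    (hA12 : A12 = (Vᗮ.orthogonalProjectionOnto).comp (A.comp V.subtypeL))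
    (Dstar : ↥Vᗮ →L[ℝ] ↥Vᗮ)
    (hDstar : Dstar = A12.comp (Einv.comp (ContinuousLinearMap.adjoint A12))) :
    IsSelfAdjoint Dstar ∧ (∀ r : ↥Vᗮ, (0 : ℝ) ≤ inner ℝ r (Dstar r)) ∧
      ∀ r : ↥Vᗮ, r ∈ LinearMap.ker (A11 : ↥Vᗮ →ₗ[ℝ] ↥Vᗮ) → r ≠ 0 → (0 : ℝ) < inner ℝ r (Dstar r) :=
  stable_viscosity_general V A hA hAinj E hE δ hδ hEneg Einv hEinv₁ A11 hA11 A12 hA12 Dstar hDstar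
end

section
/- Let H be a real Hilbert space, V a proper closed subspace with finite-dimensional orthogonal complement V⊥, and A : H → H a bounded self-adjoint injective linear operator. Define A11 := P_{V⊥} ∘ A restricted to V⊥ (self-adjoint on V⊥), A12 := P_{V⊥} ∘ A restricted to V, and T12 := P_{ker A11} ∘ A12 : V → ker A11, where P_{ker A11} is the orthogonal projection of V⊥ onto ker A11. Then: (i) the adjoint T12* : ker A11 → V is injective, the range of T12 equals ker A11, and if V is infinite-dimensional then ker T12 ≠ {0}; (ii) the restriction Ã11 of A11 to the range of A11 (which is a closed subspace of V⊥, equal to the orthogonal complement of ker A11 in V⊥) is a self-adjoint, invertible operator on that subspace. -/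
/-!
Write `A₁₁ = P_{Vᗮ} A|_{Vᗮ}` and `T₁₂ = P_{ker A₁₁} P_{Vᗮ} A|_V`. Both are built from `A` by
compositions with inclusions and orthogonal projections, which are adjoint to each other, so `A₁₁`
is self-adjoint and `T₁₂* = P_V A|_{ker A₁₁}`. For `r ∈ ker A₁₁` we have
`A r = P_V A r + A₁₁ r = T₁₂* r`, so injectivity of `A` gives injectivity of `T₁₂*`; as `ker A₁₁` is
finite-dimensional, `T₁₂` is onto, and its kernel is nontrivial once `V` is infinite-dimensional.
On the finite-dimensional space `Vᗮ`, the self-adjoint `A₁₁` has `im A₁₁ = (ker A₁₁)ᗮ`, so `A₁₁` is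
injective, hence bijective, on its range.
-/

section

open Function ContinuousLinearMap
open scoped InnerProduct

variable {𝕜 E F : Type*} [RCLike 𝕜] [NormedAddCommGroup E] [InnerProductSpace 𝕜 E]
  [NormedAddCommGroup F] [InnerProductSpace 𝕜 F]

def LinearMap.restrictRange {R M : Type*} [Semiring R] [AddCommMonoid M] [Module R M]
    (T : M →ₗ[R] M) : LinearMap.range T →ₗ[R] LinearMap.range T :=
  T.restrict fun x _ ↦ LinearMap.mem_range_self T x

namespace LinearMap.IsSymmetric

variable [FiniteDimensional 𝕜 E] {T : E →ₗ[𝕜] E}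

theorem range_eq_orthogonal_ker (hT : T.IsSymmetric) : range T = (ker T)ᗮ := by
  rw [← hT.orthogonal_range, Submodule.orthogonal_orthogonal]

theorem bijective_restrictRange (hT : T.IsSymmetric) : Bijective T.restrictRange := by
  have hinj : Injective T.restrictRange := by
    rw [restrictRange, injective_restrict_iff, hT.range_eq_orthogonal_ker]
    exact (ker T).orthogonal_disjoint.symm
  exact ⟨hinj, injective_iff_surjective.mp hinj⟩

end LinearMap.IsSymmetric

theorem ContinuousLinearMap.range_eq_top_of_injective_adjoint [CompleteSpace E] [CompleteSpace F]
    [FiniteDimensional 𝕜 F] {S : E →L[𝕜] F} (h : Injective (S†)) :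
    LinearMap.range (S : E →ₗ[𝕜] F) = ⊤ := by
  rw [← Submodule.orthogonal_eq_bot_iff, orthogonal_range, LinearMap.ker_eq_bot.mpr h]

namespace Submodule

noncomputable def compression (K : Submodule 𝕜 E) [K.HasOrthogonalProjection] (A : E →L[𝕜] E) :
    K →L[𝕜] K :=
  K.orthogonalProjectionOnto ∘L A ∘L K.subtypeL

variable [CompleteSpace E] {A : E →L[𝕜] E}

theorem _root_.IsSelfAdjoint.compression (hA : IsSelfAdjoint A) (K : Submodule 𝕜 E)
    [CompleteSpace K] : IsSelfAdjoint (K.compression A) := by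
  rw [Submodule.compression, ← K.adjoint_subtypeL]
  exact hA.adjoint_conj _

variable (A) (V : Submodule 𝕜 E) [CompleteSpace V]

/-- The operator `T₁₂` of the paper. -/
noncomputable def kerCoupling : V →L[𝕜] LinearMap.ker (Vᗮ.compression A : Vᗮ →ₗ[𝕜] Vᗮ) :=
  (LinearMap.ker (Vᗮ.compression A : Vᗮ →ₗ[𝕜] Vᗮ)).orthogonalProjectionOnto.comp
    (Vᗮ.orthogonalProjectionOnto.comp (A.comp V.subtypeL))

variable {A}

theorem adjoint_kerCoupling (hA : IsSelfAdjoint A) :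
    adjoint (𝕜 := 𝕜) (E := V) (F := LinearMap.ker (Vᗮ.compression A : Vᗮ →ₗ[𝕜] Vᗮ))
      (V.kerCoupling A) = V.orthogonalProjectionOnto ∘L A ∘L Vᗮ.subtypeL ∘L
        (LinearMap.ker (Vᗮ.compression A : Vᗮ →ₗ[𝕜] Vᗮ)).subtypeL := by
  simp only [kerCoupling, adjoint_comp, adjoint_subtypeL, adjoint_orthogonalProjectionOnto,
    hA.adjoint_eq]
  rfl

theorem injective_adjoint_kerCoupling (hA : IsSelfAdjoint A) (hAinj : Injective A) :
    Injective (adjoint (𝕜 := 𝕜) (E := V)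
      (F := LinearMap.ker (Vᗮ.compression A : Vᗮ →ₗ[𝕜] Vᗮ)) (V.kerCoupling A)) := by
  rw [adjoint_kerCoupling V hA, injective_iff_map_eq_zero]
  intro r hr
  have hAr : A r = 0 := calc
    A r = V.starProjection (A r) + Vᗮ.starProjection (A r) :=
      (V.starProjection_add_starProjection_orthogonal _).symm
    _ = 0 := by
      rw [show V.starProjection (A r) = 0 from congrArg Subtype.val hr,
        show Vᗮ.starProjection (A r) = 0 from congrArg Subtype.val r.2, add_zero]
  exact Subtype.ext (Subtype.ext ((hAinj.eq_iff' (map_zero A)).mp hAr))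

end Submodule

end

theorem canonical_reduction_algebra_general
    {H : Type*} [NormedAddCommGroup H] [InnerProductSpace ℝ H] [CompleteSpace H]
    (V : Submodule ℝ H)
    [CompleteSpace ↥V] [FiniteDimensional ℝ ↥Vᗮ]
    (A : H →L[ℝ] H) (hA : IsSelfAdjoint A) (hAinj : Function.Injective A)
    (A11 : ↥Vᗮ →L[ℝ] ↥Vᗮ)
    (hA11 : A11 = (Submodule.orthogonalProjectionOnto Vᗮ).comp (A.comp Vᗮ.subtypeL))
    (A12 : ↥V →L[ℝ] ↥Vᗮ)
    (hA12 : A12 = (Submodule.orthogonalProjectionOnto Vᗮ).comp (A.comp V.subtypeL))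
    (T12 : ↥V →L[ℝ] ↥(LinearMap.ker (A11 : ↥Vᗮ →ₗ[ℝ] ↥Vᗮ)))
    (hT12 : T12 = (Submodule.orthogonalProjectionOnto (LinearMap.ker (A11 : ↥Vᗮ →ₗ[ℝ] ↥Vᗮ))).comp A12) :
    -- (i)
    Function.Injective (ContinuousLinearMap.adjoint (𝕜 := ℝ) (E := ↥V) (F := ↥(LinearMap.ker (A11 : ↥Vᗮ →ₗ[ℝ] ↥Vᗮ))) T12) ∧
    LinearMap.range (T12 : ↥V →ₗ[ℝ] ↥(LinearMap.ker (A11 : ↥Vᗮ →ₗ[ℝ] ↥Vᗮ))) = ⊤ ∧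
    (¬ FiniteDimensional ℝ ↥V → LinearMap.ker (T12 : ↥V →ₗ[ℝ] ↥(LinearMap.ker (A11 : ↥Vᗮ →ₗ[ℝ] ↥Vᗮ))) ≠ ⊥) ∧
    -- (ii)
    LinearMap.range (A11 : ↥Vᗮ →ₗ[ℝ] ↥Vᗮ) = (LinearMap.ker (A11 : ↥Vᗮ →ₗ[ℝ] ↥Vᗮ))ᗮ ∧
    ∃ At : ↥(LinearMap.range (A11 : ↥Vᗮ →ₗ[ℝ] ↥Vᗮ)) →L[ℝ] ↥(LinearMap.range (A11 : ↥Vᗮ →ₗ[ℝ] ↥Vᗮ)),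
      (∀ x : ↥(LinearMap.range (A11 : ↥Vᗮ →ₗ[ℝ] ↥Vᗮ)), (At x : ↥Vᗮ) = A11 (x : ↥Vᗮ)) ∧
      (∀ x y : ↥(LinearMap.range (A11 : ↥Vᗮ →ₗ[ℝ] ↥Vᗮ)),
        (inner ℝ ((At x : ↥Vᗮ)) ((y : ↥Vᗮ)) : ℝ) = inner ℝ ((x : ↥Vᗮ)) ((At y : ↥Vᗮ))) ∧
      Function.Bijective At := by
  subst hA12
  obtain rfl : A11 = Vᗮ.compression A := hA11
  obtain rfl : T12 = V.kerCoupling A := hT12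
  have hinj := V.injective_adjoint_kerCoupling hA hAinj
  have hsymm := (hA.compression Vᗮ).isSymmetric
  refine ⟨hinj, ContinuousLinearMap.range_eq_top_of_injective_adjoint hinj,
    fun hinf hker ↦ hinf (.of_injective _ (LinearMap.ker_eq_bot.mp hker)),
    hsymm.range_eq_orthogonal_ker, LinearMap.toContinuousLinearMap (LinearMap.restrictRange _),
    fun _ ↦ rfl, fun x y ↦ hsymm x y, hsymm.bijective_restrictRange⟩

/-- **Key algebraic lemma for the canonical-form reduction (Lemma 2.1).**
For `A` bounded self-adjoint injective, `A11 = P_{V⊥} A |_{V⊥}`, `A12 = P_{V⊥} A |_V` and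
`T12 = P_{ker A11} ∘ A12`: (i) `T12*` is injective, `im T12 = ker A11`, and `ker T12 ≠ 0`
when `V` is infinite-dimensional; (ii) the restriction of `A11` to `im A11 = (ker A11)ᗮ`
is self-adjoint and invertible on that subspace. -/
theorem canonical_reduction_algebra
    {H : Type*} [NormedAddCommGroup H] [InnerProductSpace ℝ H] [CompleteSpace H]
    (V : Submodule ℝ H) (hVclosed : IsClosed (V : Set H)) (hVproper : V ≠ ⊤)
    [CompleteSpace ↥V] [FiniteDimensional ℝ ↥Vᗮ]
    (A : H →L[ℝ] H) (hA : IsSelfAdjoint A) (hAinj : Function.Injective A)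
    (A11 : ↥Vᗮ →L[ℝ] ↥Vᗮ)
    (hA11 : A11 = (Submodule.orthogonalProjectionOnto Vᗮ).comp (A.comp Vᗮ.subtypeL))
    (A12 : ↥V →L[ℝ] ↥Vᗮ)
    (hA12 : A12 = (Submodule.orthogonalProjectionOnto Vᗮ).comp (A.comp V.subtypeL))
    (T12 : ↥V →L[ℝ] ↥(LinearMap.ker (A11 : ↥Vᗮ →ₗ[ℝ] ↥Vᗮ)))
    (hT12 : T12 = (Submodule.orthogonalProjectionOnto (LinearMap.ker (A11 : ↥Vᗮ →ₗ[ℝ] ↥Vᗮ))).comp A12) :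
    -- (i)
    Function.Injective (ContinuousLinearMap.adjoint (𝕜 := ℝ) (E := ↥V) (F := ↥(LinearMap.ker (A11 : ↥Vᗮ →ₗ[ℝ] ↥Vᗮ))) T12) ∧
    LinearMap.range (T12 : ↥V →ₗ[ℝ] ↥(LinearMap.ker (A11 : ↥Vᗮ →ₗ[ℝ] ↥Vᗮ))) = ⊤ ∧
    (¬ FiniteDimensional ℝ ↥V → LinearMap.ker (T12 : ↥V →ₗ[ℝ] ↥(LinearMap.ker (A11 : ↥Vᗮ →ₗ[ℝ] ↥Vᗮ))) ≠ ⊥) ∧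
    -- (ii)
    LinearMap.range (A11 : ↥Vᗮ →ₗ[ℝ] ↥Vᗮ) = (LinearMap.ker (A11 : ↥Vᗮ →ₗ[ℝ] ↥Vᗮ))ᗮ ∧
    ∃ At : ↥(LinearMap.range (A11 : ↥Vᗮ →ₗ[ℝ] ↥Vᗮ)) →L[ℝ] ↥(LinearMap.range (A11 : ↥Vᗮ →ₗ[ℝ] ↥Vᗮ)),
      (∀ x : ↥(LinearMap.range (A11 : ↥Vᗮ →ₗ[ℝ] ↥Vᗮ)), (At x : ↥Vᗮ) = A11 (x : ↥Vᗮ)) ∧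
      (∀ x y : ↥(LinearMap.range (A11 : ↥Vᗮ →ₗ[ℝ] ↥Vᗮ)),
        (inner ℝ ((At x : ↥Vᗮ)) ((y : ↥Vᗮ)) : ℝ) = inner ℝ ((x : ↥Vᗮ)) ((At y : ↥Vᗮ))) ∧
      Function.Bijective At :=
  canonical_reduction_algebra_general V A hA hAinj A11 hA11 A12 hA12 T12 hT12
end

section
/- Let H be a real Hilbert space, V a proper closed subspace with finite-dimensional orthogonal complement V⊥, and A : H → H a bounded self-adjoint injective operator. Set A11 := P_{V⊥}A|_{V⊥}, A12 := P_{V⊥}A|_V, A22 := P_V A|_V, let Ã11 denote the (invertible, self-adjoint) restriction of A11 to im A11, Ã12 := P_{im A11} ∘ A12 : V → im A11, T12 := P_{ker A11} ∘ A12 : V → ker A11, V1 := range of T12* (a finite-dimensional subspace of V), and Ṽ := ker T12, so that V = V1 ⊕ Ṽ orthogonally and T12* : ker A11 → V1 is invertible. Define Γ1 := (T12*)^{−1} ∘ P_{V1} ∘ (Ã12* Ã11^{−1} Ã12 − A22)|_Ṽ : Ṽ → ker A11 and Γ0 := P_Ṽ ∘ (A22 − Ã12* Ã11^{−1} Ã12)|_Ṽ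 : Ṽ → Ṽ. Then Γ0 is bounded and symmetric (self-adjoint on Ṽ); and for any differentiable u : ℝ → V⊥, v : ℝ → V and continuous f : ℝ → V, writing u = u1 + ũ with u1 = P_{ker A11}u, ũ = P_{im A11}u and v = v1 + ṽ with v1 = P_{V1}v, ṽ = P_Ṽ v, the system { P_{V⊥}( A(u+v) )' = 0 and P_V( A(u+v) )' = −v + f } holds on ℝ if and only if the four equations hold on ℝ: (u1 − Γ1 ṽ)' = −(T12*)^{−1} v1 + (T12*)^{−1} P_{V1} f, (ũ + Ã11^{−1} Ã12 ṽ)' = 0, v1' = 0, and Γ0 ṽ' = −ṽ + P_Ṽ f. -/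
/-!
Pointwise in `x`, with `a = u'`, `b = v'`, the system is the block system
`A11 a + A12 b = 0`, `A12* a + A22 b = -v + f`. As `A11` is symmetric on the finite-dimensional
space `V⊥`, its range is `(ker A11)ᗮ`, so the first equation splits into its `ker A11` part
`T12 b = 0` (i.e. `b ∈ Ṽ = (im T12*)ᗮ`) and its range part `ã = -Ã11⁻¹ Ã12 b`. Substituting `ã`
into the second equation leaves `T12* a1 + S b = -v + f` with the Schur complement
`S = A22 - Ã12* Ã11⁻¹ Ã12`; since `T12* a1 ∈ V1`, splitting along `V = V1 ⊕ V1ᗮ` gives the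
equation for `a1` (through `(T12*)⁻¹`) and `Γ0 ṽ' = P_Ṽ (-v + f)`. Finally `Γ0` is the
compression to `Ṽ` of the self-adjoint operator `S`, hence symmetric.
-/

open ContinuousLinearMap

section

variable {𝕜 E F G : Type*} [RCLike 𝕜]
  [NormedAddCommGroup E] [InnerProductSpace 𝕜 E]
  [NormedAddCommGroup F] [InnerProductSpace 𝕜 F]
  [NormedAddCommGroup G] [InnerProductSpace 𝕜 G]

theorem Submodule.eq_iff_orthogonalProjectionOnto_eq_and (W : Submodule 𝕜 E)
    [W.HasOrthogonalProjection] {x y : E} :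
    x = y ↔ W.orthogonalProjectionOnto x = W.orthogonalProjectionOnto y ∧
      Wᗮ.orthogonalProjectionOnto x = Wᗮ.orthogonalProjectionOnto y := by
  refine ⟨fun h => h ▸ ⟨rfl, rfl⟩, fun ⟨h, h'⟩ => ?_⟩
  rw [← W.starProjection_add_starProjection_orthogonal x,
    ← W.starProjection_add_starProjection_orthogonal y, starProjection_apply,
    starProjection_apply, starProjection_apply, starProjection_apply, h, h']

theorem LinearMap.IsSymmetric.range_eq_orthogonal_ker_s4 [FiniteDimensional 𝕜 E] {T : E →ₗ[𝕜] E}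
    (hT : T.IsSymmetric) : LinearMap.range T = (LinearMap.ker T)ᗮ := by
  rw [← hT.orthogonal_range, Submodule.orthogonal_orthogonal]

namespace ContinuousLinearMap

theorem add_eq_zero_iff_add_apply_eq_zero {f g : F →L[𝕜] F} (hfg : f ∘L g = 1) (hgf : g ∘L f = 1)
    {z w : F} : f z + w = 0 ↔ z + g w = 0 := by
  constructor <;> intro h
  · simpa [← comp_apply, hgf] using congrArg g h
  · simpa [← comp_apply, hfg] using congrArg f h

theorem apply_add_eq_zero_iff_orthogonalProjectionOnto {L : E →L[𝕜] E} (K : Submodule 𝕜 E)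
    [K.HasOrthogonalProjection] (hLK : ∀ k ∈ K, L k = 0) {L' L'inv : Kᗮ →L[𝕜] Kᗮ}
    (hL' : ∀ x : Kᗮ, (L' x : E) = L x) (h₁ : L' ∘L L'inv = 1) (h₂ : L'inv ∘L L' = 1) (a e : E) :
    L a + e = 0 ↔ K.orthogonalProjectionOnto e = 0 ∧
      Kᗮ.orthogonalProjectionOnto a + L'inv (Kᗮ.orthogonalProjectionOnto e) = 0 := by
  have hLa : L a = L' (Kᗮ.orthogonalProjectionOnto a) := by
    conv_lhs => rw [← K.starProjection_add_starProjection_orthogonal a]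
    rw [map_add, hLK _ (K.starProjection_apply_mem a), zero_add, hL',
      Submodule.starProjection_apply]
  rw [K.eq_iff_orthogonalProjectionOnto_eq_and, map_add, map_add, hLa,
    K.orthogonalProjectionOnto_apply_of_mem_orthogonal (L' _).2,
    Kᗮ.orthogonalProjectionOnto_mem_subspace_eq_self, map_zero, map_zero, zero_add,
    add_eq_zero_iff_add_apply_eq_zero h₁ h₂]

theorem apply_add_eq_iff_orthogonalProjectionOnto {J : G →L[𝕜] F} (W : Submodule 𝕜 F)
    [W.HasOrthogonalProjection] (hJW : ∀ k, J k ∈ W) {Jinv : W →L[𝕜] G}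
    (h₁ : ∀ k, Jinv (W.orthogonalProjectionOnto (J k)) = k) (h₂ : ∀ w, J (Jinv w) = w)
    (k : G) (y c : F) :
    J k + y = c ↔ k + Jinv (W.orthogonalProjectionOnto y) = Jinv (W.orthogonalProjectionOnto c) ∧
      Wᗮ.orthogonalProjectionOnto y = Wᗮ.orthogonalProjectionOnto c := by
  rw [W.eq_iff_orthogonalProjectionOnto_eq_and, map_add, map_add,
    Wᗮ.orthogonalProjectionOnto_apply_of_mem_orthogonal (W.le_orthogonal_orthogonal (hJW k)),
    zero_add]
  refine and_congr_left' ⟨fun h => by rw [← h, map_add, h₁], fun h => ?_⟩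
  have hJk : (W.orthogonalProjectionOnto (J k) : F) = J k :=
    W.starProjection_eq_self_iff.mpr (hJW k)
  ext
  simpa only [Submodule.coe_add, hJk, map_add, h₂] using congrArg J h

variable [CompleteSpace E] [CompleteSpace F]

theorem orthogonal_range_adjoint (T : E →L[𝕜] F) :
    (LinearMap.range (adjoint T : F →ₗ[𝕜] E))ᗮ = LinearMap.ker (T : E →ₗ[𝕜] F) := by
  simpa only [adjoint_adjoint] using orthogonal_range (adjoint T)

theorem adjoint_apply_eq_add_orthogonal (B : F →L[𝕜] E) (K : Submodule 𝕜 E) [CompleteSpace K]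
    (a : E) :
    adjoint B a = adjoint (K.orthogonalProjectionOnto ∘L B) (K.orthogonalProjectionOnto a) +
      adjoint (Kᗮ.orthogonalProjectionOnto ∘L B) (Kᗮ.orthogonalProjectionOnto a) := by
  simp only [adjoint_comp, Submodule.adjoint_orthogonalProjectionOnto, comp_apply,
    Submodule.subtypeL_apply, ← map_add, ← Submodule.starProjection_apply,
    Submodule.starProjection_add_starProjection_orthogonal]

theorem IsSelfAdjoint.orthogonalProjectionOnto_comp_comp_subtypeL {A : E →L[𝕜] E}
    (hA : IsSelfAdjoint A) (W : Submodule 𝕜 E) [CompleteSpace W] :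
    IsSelfAdjoint (W.orthogonalProjectionOnto ∘L A ∘L W.subtypeL) := by
  simpa only [W.adjoint_subtypeL] using hA.adjoint_conj W.subtypeL

theorem IsSelfAdjoint.adjoint_orthogonalProjectionOnto_comp_comp_subtypeL {A : E →L[𝕜] E}
    (hA : IsSelfAdjoint A) (U W : Submodule 𝕜 E) [CompleteSpace U] [CompleteSpace W] :
    adjoint (U.orthogonalProjectionOnto ∘L A ∘L W.subtypeL) =
      W.orthogonalProjectionOnto ∘L A ∘L U.subtypeL := by
  rw [← U.adjoint_subtypeL, ← W.adjoint_subtypeL, adjoint_comp, adjoint_comp, adjoint_adjoint,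
    hA.adjoint_eq, comp_assoc]

theorem IsSelfAdjoint.of_coe_apply {A : E →L[𝕜] E} (hA : IsSelfAdjoint A) {W : Submodule 𝕜 E}
    [CompleteSpace W] {B : W →L[𝕜] W} (hB : ∀ x : W, (B x : E) = A x) : IsSelfAdjoint B :=
  isSelfAdjoint_iff_isSymmetric.mpr fun x y => by
    simp only [coe_coe, Submodule.coe_inner, hB]
    exact hA.isSymmetric x y

theorem IsSelfAdjoint.of_comp_eq_one {T S : E →L[𝕜] E} (hT : IsSelfAdjoint T) (hTS : T ∘L S = 1) :
    IsSelfAdjoint S := by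
  have hST : adjoint S * T = 1 := by
    rw [← hT.adjoint_eq, mul_def, ← adjoint_comp, hTS, adjoint_one]
  exact isSelfAdjoint_iff'.mpr (left_inv_eq_right_inv hST hTS)

end ContinuousLinearMap

variable [CompleteSpace E] [CompleteSpace F] [CompleteSpace G]

noncomputable def schurComplement (D : F →L[𝕜] F) (B : F →L[𝕜] G) (C : G →L[𝕜] G) : F →L[𝕜] F :=
  D - adjoint B ∘L C ∘L B

theorem IsSelfAdjoint.schurComplement {D : F →L[𝕜] F} {C : G →L[𝕜] G} (hD : IsSelfAdjoint D)
    (hC : IsSelfAdjoint C) (B : F →L[𝕜] G) : IsSelfAdjoint (schurComplement D B C) :=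
  hD.sub (hC.adjoint_conj B)

local notation "P" => Submodule.orthogonalProjectionOnto

theorem block_system_iff_canonical_form {A11 : E →L[𝕜] E} {A12 : F →L[𝕜] E} {A22 : F →L[𝕜] F}
    {K : Submodule 𝕜 E} [CompleteSpace K] (hK : ∀ k ∈ K, A11 k = 0)
    {At11 At11inv : Kᗮ →L[𝕜] Kᗮ} (hAt11 : ∀ x, (At11 x : E) = A11 x)
    (h₁ : At11 ∘L At11inv = 1) (h₂ : At11inv ∘L At11 = 1)
    {V1 : Submodule 𝕜 F} [CompleteSpace V1]
    (hV1 : V1 = LinearMap.range (adjoint (P K ∘L A12) : K →ₗ[𝕜] F))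
    {Tinv : V1 →L[𝕜] K} (hTinv₁ : ∀ r, Tinv (P V1 (adjoint (P K ∘L A12) r)) = r)
    (hTinv₂ : ∀ w, adjoint (P K ∘L A12) (Tinv w) = w)
    {Γ1 : V1ᗮ →L[𝕜] K} (hΓ1 : Γ1 = Tinv ∘L P V1 ∘L
      (adjoint (P Kᗮ ∘L A12) ∘L (At11inv ∘L (P Kᗮ ∘L A12)) - A22) ∘L V1ᗮ.subtypeL)
    {Γ0 : V1ᗮ →L[𝕜] V1ᗮ}
    (hΓ0 : Γ0 = P V1ᗮ ∘L schurComplement A22 (P Kᗮ ∘L A12) At11inv ∘L V1ᗮ.subtypeL)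
    (a : E) (b c : F) :
    (A11 a + A12 b = 0 ∧ adjoint A12 a + A22 b = c) ↔
      (P K a - Γ1 (P V1ᗮ b) = Tinv (P V1 c) ∧
        P Kᗮ a + At11inv ((P Kᗮ ∘L A12) (P V1ᗮ b)) = 0 ∧ P V1 b = 0 ∧
        Γ0 (P V1ᗮ b) = P V1ᗮ c) := by
  have hker : P K (A12 b) = 0 ↔ b ∈ V1ᗮ := by
    rw [hV1, orthogonal_range_adjoint]; rfl
  rw [apply_add_eq_zero_iff_orthogonalProjectionOnto K hK hAt11 h₁ h₂, hker,
    Submodule.orthogonalProjectionOnto_eq_zero_iff]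
  by_cases hb : b ∈ V1ᗮ
  swap
  · simp [hb]
  set S := schurComplement A22 (P Kᗮ ∘L A12) At11inv
  have hΓ1b : Γ1 ⟨b, hb⟩ = -Tinv (P V1 (S b)) := by
    rw [hΓ1, ← map_neg, ← map_neg]
    simp [S, schurComplement]
  have hΓ0b : Γ0 ⟨b, hb⟩ = P V1ᗮ (S b) := by rw [hΓ0]; rfl
  rw [Submodule.orthogonalProjectionOnto_mem_subspace_eq_self ⟨b, hb⟩, hΓ1b, hΓ0b, sub_neg_eq_add]
  simp only [hb, true_and]
  rw [and_left_comm]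
  refine and_congr_right fun ha => ?_
  have hsplit : adjoint A12 a + A22 b = adjoint (P K ∘L A12) (P K a) + S b := by
    rw [adjoint_apply_eq_add_orthogonal A12 K a, eq_neg_of_add_eq_zero_left ha]
    simp only [S, schurComplement, adjoint_comp, comp_apply, map_neg, sub_apply]
    abel
  rw [hsplit, apply_add_eq_iff_orthogonalProjectionOnto V1 (fun k => hV1 ▸ ⟨k, rfl⟩) hTinv₁ hTinv₂]

end

theorem canonical_form_reduction_general
    {H : Type*} [NormedAddCommGroup H] [InnerProductSpace ℝ H] [CompleteSpace H]
    (V : Submodule ℝ H)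
    [CompleteSpace ↥V] [FiniteDimensional ℝ ↥Vᗮ]
    (A : H →L[ℝ] H) (hA : IsSelfAdjoint A)
    (A11 : ↥Vᗮ →L[ℝ] ↥Vᗮ)
    (hA11 : A11 = (Submodule.orthogonalProjectionOnto Vᗮ).comp (A.comp Vᗮ.subtypeL))
    (A12 : ↥V →L[ℝ] ↥Vᗮ)
    (hA12 : A12 = (Submodule.orthogonalProjectionOnto Vᗮ).comp (A.comp V.subtypeL))
    (A22 : ↥V →L[ℝ] ↥V)
    (hA22 : A22 = (Submodule.orthogonalProjectionOnto V).comp (A.comp V.subtypeL))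
    (K : Submodule ℝ ↥Vᗮ) (hK : K = LinearMap.ker (A11 : ↥Vᗮ →ₗ[ℝ] ↥Vᗮ))
    (R : Submodule ℝ ↥Vᗮ) (hR : R = LinearMap.range (A11 : ↥Vᗮ →ₗ[ℝ] ↥Vᗮ))
    -- `Ã11`: the invertible self-adjoint restriction of `A11` to `R = im A11`
    (At11 : ↥R →L[ℝ] ↥R) (hAt11 : ∀ x : ↥R, (At11 x : ↥Vᗮ) = A11 (x : ↥Vᗮ))
    (At11inv : ↥R →L[ℝ] ↥R)
    (hAt11inv₁ : At11.comp At11inv = 1) (hAt11inv₂ : At11inv.comp At11 = 1)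
    -- `Ã12 = P_{im A11} ∘ A12` and `T12 = P_{ker A11} ∘ A12`
    (At12 : ↥V →L[ℝ] ↥R) (hAt12 : At12 = (Submodule.orthogonalProjectionOnto R).comp A12)
    (T12 : ↥V →L[ℝ] ↥K) (hT12 : T12 = (Submodule.orthogonalProjectionOnto K).comp A12)
    -- `V1 = im T12*` and `Ṽ = ker T12`
    (V1 : Submodule ℝ ↥V) (hV1 : V1 = LinearMap.range (adjoint (𝕜 := ℝ) (E := ↥V) (F := ↥K) T12 : ↥K →ₗ[ℝ] ↥V))
    (Vt : Submodule ℝ ↥V) (hVt : Vt = LinearMap.ker (T12 : ↥V →ₗ[ℝ] ↥K)) [CompleteSpace ↥Vt]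
    [FiniteDimensional ℝ ↥V1]
    -- `(T12*)⁻¹ : V1 → ker A11`, the inverse of the invertible map `T12* : ker A11 → V1`
    (Tinv : ↥V1 →L[ℝ] ↥K)
    (hTinv₁ : ∀ r : ↥K, Tinv (Submodule.orthogonalProjectionOnto V1 (adjoint (𝕜 := ℝ) (E := ↥V) (F := ↥K) T12 r)) = r)
    (hTinv₂ : ∀ w : ↥V1, adjoint (𝕜 := ℝ) (E := ↥V) (F := ↥K) T12 (Tinv w) = (w : ↥V))
    -- `Γ1` and `Γ0`
    (Γ1 : ↥Vt →L[ℝ] ↥K)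
    (hΓ1 : Γ1 = Tinv.comp ((Submodule.orthogonalProjectionOnto V1).comp
      ((((adjoint (𝕜 := ℝ) (E := ↥V) (F := ↥R) At12).comp (At11inv.comp At12) - A22)).comp Vt.subtypeL)))
    (Γ0 : ↥Vt →L[ℝ] ↥Vt)
    (hΓ0 : Γ0 = (Submodule.orthogonalProjectionOnto Vt).comp
      ((A22 - (adjoint (𝕜 := ℝ) (E := ↥V) (F := ↥R) At12).comp (At11inv.comp At12)).comp Vt.subtypeL)) :
    -- `Γ0` is bounded symmetric (self-adjoint on `Ṽ`); `V = V1 ⊕ Ṽ` orthogonally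
    (∀ x y : ↥Vt, (inner ℝ (Γ0 x) y : ℝ) = inner ℝ x (Γ0 y)) ∧
    Vt = V1ᗮ ∧
    -- equivalence of the two systems
    (∀ (u : ℝ → ↥Vᗮ) (u' : ℝ → ↥Vᗮ) (v : ℝ → ↥V) (v' : ℝ → ↥V) (f : ℝ → ↥V),
      (∀ x : ℝ, HasDerivAt u (u' x) x) → (∀ x : ℝ, HasDerivAt v (v' x) x) →
      Continuous f →
      ((∀ x : ℝ,
          Submodule.orthogonalProjectionOnto Vᗮ (A ((u' x : H) + (v' x : H))) = 0 ∧
          Submodule.orthogonalProjectionOnto V (A ((u' x : H) + (v' x : H))) = -(v x) + f x) ↔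
        (∀ x : ℝ,
          Submodule.orthogonalProjectionOnto K (u' x) - Γ1 (Submodule.orthogonalProjectionOnto Vt (v' x)) =
            -(Tinv (Submodule.orthogonalProjectionOnto V1 (v x))) + Tinv (Submodule.orthogonalProjectionOnto V1 (f x)) ∧
          Submodule.orthogonalProjectionOnto R (u' x) + At11inv (At12 (Submodule.orthogonalProjectionOnto Vt (v' x))) = 0 ∧
          Submodule.orthogonalProjectionOnto V1 (v' x) = 0 ∧
          Γ0 (Submodule.orthogonalProjectionOnto Vt (v' x)) =
            -(Submodule.orthogonalProjectionOnto Vt (v x)) + Submodule.orthogonalProjectionOnto Vt (f x)))) := by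
  have hA11sa : IsSelfAdjoint A11 := hA11 ▸ hA.orthogonalProjectionOnto_comp_comp_subtypeL Vᗮ
  have hA22sa : IsSelfAdjoint A22 := hA22 ▸ hA.orthogonalProjectionOnto_comp_comp_subtypeL V
  have hRK : R = Kᗮ := hR ▸ hK ▸ hA11sa.isSymmetric.range_eq_orthogonal_ker_s4
  have hVtV1 : Vt = V1ᗮ := by rw [hVt, hV1, orthogonal_range_adjoint]
  subst hRK hK hVtV1 hAt12 hT12
  have hAt11inv : IsSelfAdjoint At11inv := (hA11sa.of_coe_apply hAt11).of_comp_eq_one hAt11inv₁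
  refine ⟨?_, rfl, fun u u' v v' f _ _ _ => forall_congr' fun x => ?_⟩
  · rw [hΓ0]
    exact ((hA22sa.schurComplement hAt11inv _).orthogonalProjectionOnto_comp_comp_subtypeL _).isSymmetric
  have hblock₁ : Submodule.orthogonalProjectionOnto Vᗮ (A ((u' x : H) + (v' x : H))) =
      A11 (u' x) + A12 (v' x) := by
    rw [hA11, hA12]; simp
  have hblock₂ : Submodule.orthogonalProjectionOnto V (A ((u' x : H) + (v' x : H))) =
      adjoint A12 (u' x) + A22 (v' x) := by
    rw [hA12, hA.adjoint_orthogonalProjectionOnto_comp_comp_subtypeL, hA22]; simp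
  rw [hblock₁, hblock₂]
  simpa only [map_add, map_neg] using block_system_iff_canonical_form (fun k hk => hk) hAt11
    hAt11inv₁ hAt11inv₂ hV1 hTinv₁ hTinv₂ hΓ1 hΓ0 (u' x) (v' x) (-v x + f x)

/-- **Reduction of the steady kinetic equation to canonical form.**
With `A` bounded self-adjoint injective, `A11, A12, A22` the blocks of `A` with respect to
`H = V⊥ ⊕ V`, `Ã11` the invertible restriction of `A11` to `R = im A11`, `T12 = P_{ker A11} A12`,
`V1 = im T12*`, `Ṽ = ker T12`, `Γ1 = (T12*)⁻¹ P_{V1}(Ã12* Ã11⁻¹ Ã12 − A22)|_Ṽ` and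
`Γ0 = P_Ṽ (A22 − Ã12* Ã11⁻¹ Ã12)|_Ṽ`: the operator `Γ0` is symmetric, `Ṽ = V1ᗮ`, and
the system `(P_{V⊥} A(u+v))' = 0`, `(P_V A(u+v))' = −v + f` is equivalent to the four
equations `(u1 − Γ1 ṽ)' = −(T12*)⁻¹ v1 + (T12*)⁻¹ P_{V1} f`, `(ũ + Ã11⁻¹ Ã12 ṽ)' = 0`,
`v1' = 0`, `Γ0 ṽ' = −ṽ + P_Ṽ f`. -/
theorem canonical_form_reduction
    {H : Type*} [NormedAddCommGroup H] [InnerProductSpace ℝ H] [CompleteSpace H]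
    (V : Submodule ℝ H) (hVclosed : IsClosed (V : Set H)) (hVproper : V ≠ ⊤)
    [CompleteSpace ↥V] [FiniteDimensional ℝ ↥Vᗮ]
    (A : H →L[ℝ] H) (hA : IsSelfAdjoint A) (hAinj : Function.Injective A)
    (A11 : ↥Vᗮ →L[ℝ] ↥Vᗮ)
    (hA11 : A11 = (Submodule.orthogonalProjectionOnto Vᗮ).comp (A.comp Vᗮ.subtypeL))
    (A12 : ↥V →L[ℝ] ↥Vᗮ)
    (hA12 : A12 = (Submodule.orthogonalProjectionOnto Vᗮ).comp (A.comp V.subtypeL))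
    (A22 : ↥V →L[ℝ] ↥V)
    (hA22 : A22 = (Submodule.orthogonalProjectionOnto V).comp (A.comp V.subtypeL))
    (K : Submodule ℝ ↥Vᗮ) (hK : K = LinearMap.ker (A11 : ↥Vᗮ →ₗ[ℝ] ↥Vᗮ))
    (R : Submodule ℝ ↥Vᗮ) (hR : R = LinearMap.range (A11 : ↥Vᗮ →ₗ[ℝ] ↥Vᗮ))
    -- `Ã11`: the invertible self-adjoint restriction of `A11` to `R = im A11`
    (At11 : ↥R →L[ℝ] ↥R) (hAt11 : ∀ x : ↥R, (At11 x : ↥Vᗮ) = A11 (x : ↥Vᗮ))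
    (At11inv : ↥R →L[ℝ] ↥R)
    (hAt11inv₁ : At11.comp At11inv = 1) (hAt11inv₂ : At11inv.comp At11 = 1)
    -- `Ã12 = P_{im A11} ∘ A12` and `T12 = P_{ker A11} ∘ A12`
    (At12 : ↥V →L[ℝ] ↥R) (hAt12 : At12 = (Submodule.orthogonalProjectionOnto R).comp A12)
    (T12 : ↥V →L[ℝ] ↥K) (hT12 : T12 = (Submodule.orthogonalProjectionOnto K).comp A12)
    -- `V1 = im T12*` and `Ṽ = ker T12`
    (V1 : Submodule ℝ ↥V) (hV1 : V1 = LinearMap.range (adjoint (𝕜 := ℝ) (E := ↥V) (F := ↥K) T12 : ↥K →ₗ[ℝ] ↥V))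
    (Vt : Submodule ℝ ↥V) (hVt : Vt = LinearMap.ker (T12 : ↥V →ₗ[ℝ] ↥K)) [CompleteSpace ↥Vt]
    [FiniteDimensional ℝ ↥V1]
    -- `(T12*)⁻¹ : V1 → ker A11`, the inverse of the invertible map `T12* : ker A11 → V1`
    (Tinv : ↥V1 →L[ℝ] ↥K)
    (hTinv₁ : ∀ r : ↥K, Tinv (Submodule.orthogonalProjectionOnto V1 (adjoint (𝕜 := ℝ) (E := ↥V) (F := ↥K) T12 r)) = r)
    (hTinv₂ : ∀ w : ↥V1, adjoint (𝕜 := ℝ) (E := ↥V) (F := ↥K) T12 (Tinv w) = (w : ↥V))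
    -- `Γ1` and `Γ0`
    (Γ1 : ↥Vt →L[ℝ] ↥K)
    (hΓ1 : Γ1 = Tinv.comp ((Submodule.orthogonalProjectionOnto V1).comp
      ((((adjoint (𝕜 := ℝ) (E := ↥V) (F := ↥R) At12).comp (At11inv.comp At12) - A22)).comp Vt.subtypeL)))
    (Γ0 : ↥Vt →L[ℝ] ↥Vt)
    (hΓ0 : Γ0 = (Submodule.orthogonalProjectionOnto Vt).comp
      ((A22 - (adjoint (𝕜 := ℝ) (E := ↥V) (F := ↥R) At12).comp (At11inv.comp At12)).comp Vt.subtypeL)) :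
    -- `Γ0` is bounded symmetric (self-adjoint on `Ṽ`); `V = V1 ⊕ Ṽ` orthogonally
    (∀ x y : ↥Vt, (inner ℝ (Γ0 x) y : ℝ) = inner ℝ x (Γ0 y)) ∧
    Vt = V1ᗮ ∧
    -- equivalence of the two systems
    (∀ (u : ℝ → ↥Vᗮ) (u' : ℝ → ↥Vᗮ) (v : ℝ → ↥V) (v' : ℝ → ↥V) (f : ℝ → ↥V),
      (∀ x : ℝ, HasDerivAt u (u' x) x) → (∀ x : ℝ, HasDerivAt v (v' x) x) →
      Continuous f →
      ((∀ x : ℝ,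
          Submodule.orthogonalProjectionOnto Vᗮ (A ((u' x : H) + (v' x : H))) = 0 ∧
          Submodule.orthogonalProjectionOnto V (A ((u' x : H) + (v' x : H))) = -(v x) + f x) ↔
        (∀ x : ℝ,
          Submodule.orthogonalProjectionOnto K (u' x) - Γ1 (Submodule.orthogonalProjectionOnto Vt (v' x)) =
            -(Tinv (Submodule.orthogonalProjectionOnto V1 (v x))) + Tinv (Submodule.orthogonalProjectionOnto V1 (f x)) ∧
          Submodule.orthogonalProjectionOnto R (u' x) + At11inv (At12 (Submodule.orthogonalProjectionOnto Vt (v' x))) = 0 ∧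
          Submodule.orthogonalProjectionOnto V1 (v' x) = 0 ∧
          Γ0 (Submodule.orthogonalProjectionOnto Vt (v' x)) =
            -(Submodule.orthogonalProjectionOnto Vt (v x)) + Submodule.orthogonalProjectionOnto Vt (f x)))) :=
  canonical_form_reduction_general V A hA A11 hA11 A12 hA12 A22 hA22 K hK R hR At11 hAt11 At11inv
    hAt11inv₁ hAt11inv₂ At12 hAt12 T12 hT12 V1 hV1 Vt hVt Tinv hTinv₁ hTinv₂ Γ1 hΓ1 Γ0 hΓ0
end

section
/- Let H be a real Hilbert space and Γ0 : H → H a bounded symmetric linear operator (⟨Γ0 x, y⟩ = ⟨x, Γ0 y⟩ for all x, y ∈ H). Let u : ℝ → H be continuously differentiable with both u and u' square-integrable, i.e. ∫_ℝ ‖u(x)‖² dx < ∞ and ∫_ℝ ‖u'(x)‖² dx < ∞. Then ‖u‖_{L²(ℝ,H)} ≤ ‖Γ0 u' + u‖_{L²(ℝ,H)}. -/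
/-!
Pairing `Γ0 u' + u` with `u` in `L²(ℝ, H)`, the cross term `∫ ⟪u, Γ0 u'⟫` vanishes: by symmetry of
`Γ0` it is half the integral of the derivative of `⟪u, Γ0 u⟫`, which is integrable together with
its derivative and therefore has total integral zero. Hence `‖u‖² = ⟪u, Γ0 u' + u⟫ ≤ ‖u‖ ‖Γ0 u' + u‖`
by Cauchy–Schwarz in `L²`.
-/

open MeasureTheory
open scoped RealInnerProductSpace

section L2

variable {α E : Type*} [MeasurableSpace α] {μ : Measure α}
  [NormedAddCommGroup E] [InnerProductSpace ℝ E] {f g : α → E}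

theorem MeasureTheory.MemLp.integral_inner_eq_inner_toLp (hf : MemLp f 2 μ) (hg : MemLp g 2 μ) :
    ∫ x, ⟪f x, g x⟫ ∂μ = ⟪hf.toLp f, hg.toLp g⟫ := by
  rw [L2.inner_def]
  refine integral_congr_ae ?_
  filter_upwards [hf.coeFn_toLp, hg.coeFn_toLp] with x hfx hgx
  rw [hfx, hgx]

theorem MeasureTheory.MemLp.integrable_inner (hf : MemLp f 2 μ) (hg : MemLp g 2 μ) :
    Integrable (fun x => ⟪f x, g x⟫) μ := by
  refine (L2.integrable_inner (𝕜 := ℝ) (hf.toLp f) (hg.toLp g)).congr ?_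
  filter_upwards [hf.coeFn_toLp, hg.coeFn_toLp] with x hfx hgx
  rw [hfx, hgx]

theorem MeasureTheory.MemLp.norm_toLp_two (hf : MemLp f 2 μ) :
    ‖hf.toLp f‖ = √(∫ x, ‖f x‖ ^ 2 ∂μ) := by
  simp_rw [← real_inner_self_eq_norm_sq, hf.integral_inner_eq_inner_toLp hf,
    real_inner_self_eq_norm_sq, Real.sqrt_sq (norm_nonneg _)]

theorem MeasureTheory.MemLp.integral_inner_le_sqrt_mul_sqrt (hf : MemLp f 2 μ)
    (hg : MemLp g 2 μ) :
    ∫ x, ⟪f x, g x⟫ ∂μ ≤ √(∫ x, ‖f x‖ ^ 2 ∂μ) * √(∫ x, ‖g x‖ ^ 2 ∂μ) := by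
  rw [hf.integral_inner_eq_inner_toLp hg, ← hf.norm_toLp_two, ← hg.norm_toLp_two]
  exact real_inner_le_norm _ _

end L2

section SymmetricOperator

variable {H : Type*} [NormedAddCommGroup H] [InnerProductSpace ℝ H] {T : H →L[ℝ] H}

theorem HasDerivAt.inner_apply_self_of_isSymmetric (hT : (T : H →ₗ[ℝ] H).IsSymmetric)
    {u : ℝ → H} {u' : H} {x : ℝ} (hu : HasDerivAt u u' x) :
    HasDerivAt (fun t => ⟪u t, T (u t)⟫) (2 * ⟪u x, T u'⟫) x := by
  refine (hu.inner ℝ (T.hasFDerivAt.comp_hasDerivAt x hu)).congr_deriv ?_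
  simp only [Function.comp_apply, ← hT.apply_clm u', real_inner_comm (u x)]
  ring

theorem integral_inner_apply_deriv_eq_zero_of_isSymmetric (hT : (T : H →ₗ[ℝ] H).IsSymmetric)
    {u u' : ℝ → H} (hu : ∀ x, HasDerivAt u (u' x) x) (hu2 : MemLp u 2) (hu'2 : MemLp u' 2) :
    ∫ x, ⟪u x, T (u' x)⟫ = 0 := by
  have h := integral_eq_zero_of_hasDerivAt_of_integrable
    (fun x => (hu x).inner_apply_self_of_isSymmetric hT)
    ((hu2.integrable_inner (T.comp_memLp' hu'2)).const_mul 2)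
    (hu2.integrable_inner (T.comp_memLp' hu2))
  rwa [integral_const_mul, mul_eq_zero, or_iff_right two_ne_zero] at h

end SymmetricOperator

theorem energy_estimate_general
    {H : Type*} [NormedAddCommGroup H] [InnerProductSpace ℝ H]
    (Γ0 : H →L[ℝ] H) (hΓ0 : ∀ x y : H, (inner ℝ (Γ0 x) y : ℝ) = inner ℝ x (Γ0 y))
    (u : ℝ → H) (hu : ContDiff ℝ 1 u)
    (hu2 : Integrable (fun x : ℝ => ‖u x‖ ^ 2))
    (hu'2 : Integrable (fun x : ℝ => ‖deriv u x‖ ^ 2)) :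
    Real.sqrt (∫ x : ℝ, ‖u x‖ ^ 2) ≤
      Real.sqrt (∫ x : ℝ, ‖Γ0 (deriv u x) + u x‖ ^ 2) := by
  have hderiv (x : ℝ) : HasDerivAt u (deriv u x) x :=
    (hu.differentiable one_ne_zero x).hasDerivAt
  have hu_mem : MemLp u 2 :=
    (memLp_two_iff_integrable_sq_norm hu.continuous.aestronglyMeasurable).2 hu2
  have hu'_mem : MemLp (deriv u) 2 :=
    (memLp_two_iff_integrable_sq_norm (hu.continuous_deriv le_rfl).aestronglyMeasurable).2 hu'2
  have hΓ0u'_mem : MemLp (fun x => Γ0 (deriv u x)) 2 := Γ0.comp_memLp' hu'_mem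
  have hcross : ∫ x, ⟪u x, Γ0 (deriv u x)⟫ = 0 :=
    integral_inner_apply_deriv_eq_zero_of_isSymmetric hΓ0 hderiv hu_mem hu'_mem
  have henergy : ∫ x, ⟪u x, Γ0 (deriv u x) + u x⟫ = ∫ x, ‖u x‖ ^ 2 := by
    simp_rw [inner_add_right, real_inner_self_eq_norm_sq]
    rw [integral_add (hu_mem.integrable_inner hΓ0u'_mem) hu2, hcross, zero_add]
  have hG_mem : MemLp (fun x => Γ0 (deriv u x) + u x) 2 := hΓ0u'_mem.add hu_mem
  have hCS := hu_mem.integral_inner_le_sqrt_mul_sqrt hG_mem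
  rw [henergy] at hCS
  have hsq : √(∫ x, ‖u x‖ ^ 2) ^ 2 = ∫ x, ‖u x‖ ^ 2 :=
    Real.sq_sqrt (integral_nonneg fun x => sq_nonneg ‖u x‖)
  nlinarith [Real.sqrt_nonneg (∫ x, ‖u x‖ ^ 2),
    Real.sqrt_nonneg (∫ x, ‖Γ0 (deriv u x) + u x‖ ^ 2)]

/-- **A priori energy estimate for the degenerate symmetric evolution equation.**
For `Γ0` bounded symmetric and `u ∈ H¹(ℝ, H)` (here: `C¹` with `u, u'` square integrable),
one has `‖u‖_{L²} ≤ ‖Γ0 u' + u‖_{L²}`. -/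
theorem energy_estimate
    {H : Type*} [NormedAddCommGroup H] [InnerProductSpace ℝ H] [CompleteSpace H]
    (Γ0 : H →L[ℝ] H) (hΓ0 : ∀ x y : H, (inner ℝ (Γ0 x) y : ℝ) = inner ℝ x (Γ0 y))
    (u : ℝ → H) (hu : ContDiff ℝ 1 u)
    (hu2 : Integrable (fun x : ℝ => ‖u x‖ ^ 2))
    (hu'2 : Integrable (fun x : ℝ => ‖deriv u x‖ ^ 2)) :
    Real.sqrt (∫ x : ℝ, ‖u x‖ ^ 2) ≤
      Real.sqrt (∫ x : ℝ, ‖Γ0 (deriv u x) + u x‖ ^ 2) :=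
  energy_estimate_general Γ0 hΓ0 u hu hu2 hu'2
end

section
/- Let H be a real Hilbert space, let 0 < α < α₂, write ⟨x⟩ := (1 + x²)^{1/2}, and let f : ℝ → H be continuously differentiable with ‖e^{−α⟨·⟩} f‖_{L²(ℝ,H)} < ∞ and ‖e^{−α₂⟨·⟩} f'‖_{L²(ℝ,H)} < ∞. Then for every x ∈ ℝ: e^{−2α₂⟨x⟩} ‖f(x)‖² ≤ 2 e^{−(α₂−α)⟨x⟩} ‖e^{−α⟨·⟩} f‖_{L²((x,∞),H)} · ( ‖e^{−α₂⟨·⟩} f'‖_{L²((x,∞),H)} + α₂ ‖e^{−α₂⟨·⟩} f‖_{L²((x,∞),H)} ), where in particular the last factor is finite since e^{−α₂⟨y⟩} ≤ e^{−α⟨y⟩}. -/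
/-! With `g := e^{-(α+α₂)⟨·⟩} ‖f‖²`, both `g` and `g'` are integrable on `(x, ∞)`, so `g` vanishes
at infinity and `g x = -∫_x^∞ g'`. Since `|⟨y⟩'| ≤ 1`,
`|g'| ≤ (α+α₂) e^{-α⟨·⟩}‖f‖ · e^{-α₂⟨·⟩}‖f‖ + 2 e^{-α⟨·⟩}‖f‖ · e^{-α₂⟨·⟩}‖f'‖`,
and Cauchy–Schwarz on `(x, ∞)` bounds both integrals. Finally
`e^{-2α₂⟨x⟩} = e^{-(α₂-α)⟨x⟩} e^{-(α+α₂)⟨x⟩}` and `α + α₂ ≤ 2α₂`. -/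

open MeasureTheory

set_option synthInstance.maxHeartbeats 400000
set_option maxHeartbeats 1000000

/-- The Japanese bracket `⟨x⟩ = (1 + x²)^{1/2}`. -/
noncomputable def jbracket (x : ℝ) : ℝ := Real.sqrt (1 + x ^ 2)

open Set Filter Topology
open scoped RealInnerProductSpace

theorem norm_le_integral_Ioi_of_hasDerivAt {E : Type*} [NormedAddCommGroup E]
    [NormedSpace ℝ E] [CompleteSpace E] {g g' : ℝ → E} {F : ℝ → ℝ} {a : ℝ}
    (hderiv : ∀ y ∈ Ici a, HasDerivAt g (g' y) y)
    (hg : IntegrableOn g (Ioi a)) (hF : IntegrableOn F (Ioi a))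
    (hbound : ∀ y ∈ Ioi a, ‖g' y‖ ≤ F y) :
    ‖g a‖ ≤ ∫ y in Ioi a, F y := by
  have hbound_ae : ∀ᵐ y ∂volume.restrict (Ioi a), ‖g' y‖ ≤ F y :=
    (ae_restrict_iff' measurableSet_Ioi).2 (ae_of_all _ hbound)
  have hg' : AEStronglyMeasurable g' (volume.restrict (Ioi a)) :=
    (aestronglyMeasurable_deriv g _).congr <| (ae_restrict_iff' measurableSet_Ioi).2 <|
      ae_of_all _ fun y hy => (hderiv y (mem_Ici_of_Ioi hy)).deriv
  have hg'int : IntegrableOn g' (Ioi a) := hF.mono' hg' hbound_ae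
  have hlim : Tendsto g atTop (𝓝 0) :=
    tendsto_zero_of_hasDerivAt_of_integrableOn_Ioi (fun y hy => hderiv y hy.out.le) hg'int hg
  have hftc : ∫ y in Ioi a, g' y = -g a := by
    rw [integral_Ioi_of_hasDerivAt_of_tendsto' hderiv hg'int hlim, zero_sub]
  calc ‖g a‖ = ‖∫ y in Ioi a, g' y‖ := by rw [hftc, norm_neg]
    _ ≤ ∫ y in Ioi a, F y := norm_integral_le_of_norm_le hF hbound_ae

theorem integral_mul_le_sqrt_integral_sq_mul_sqrt_integral_sq {Ω : Type*} [MeasurableSpace Ω]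
    {μ : Measure Ω} {a b : Ω → ℝ} (ha₀ : 0 ≤ᵐ[μ] a) (hb₀ : 0 ≤ᵐ[μ] b)
    (ha : MemLp a 2 μ) (hb : MemLp b 2 μ) :
    ∫ y, a y * b y ∂μ ≤ Real.sqrt (∫ y, a y ^ 2 ∂μ) * Real.sqrt (∫ y, b y ^ 2 ∂μ) := by
  have h := integral_mul_le_Lp_mul_Lq_of_nonneg Real.HolderConjugate.two_two ha₀ hb₀
    (by simpa using ha) (by simpa using hb)
  simpa only [Real.rpow_two, Real.sqrt_eq_rpow, one_div] using h

lemma jbracket_nonneg (x : ℝ) : 0 ≤ jbracket x := Real.sqrt_nonneg _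

lemma abs_le_jbracket (x : ℝ) : |x| ≤ jbracket x := by
  rw [← Real.sqrt_sq_eq_abs]
  exact Real.sqrt_le_sqrt (by linarith)

lemma continuous_jbracket : Continuous jbracket := by
  unfold jbracket; fun_prop

lemma hasDerivAt_jbracket (y : ℝ) : HasDerivAt jbracket (y / jbracket y) y := by
  have hpos : (0 : ℝ) < 1 + y ^ 2 := by positivity
  refine (((hasDerivAt_pow 2 y).const_add 1).sqrt hpos.ne').congr_deriv ?_
  simp only [jbracket, Nat.cast_ofNat, pow_one, Nat.add_one_sub_one]
  field_simp

lemma abs_div_jbracket_le_one (y : ℝ) : |y / jbracket y| ≤ 1 := by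
  rw [abs_div, abs_of_nonneg (jbracket_nonneg y)]
  exact div_le_one_of_le₀ (abs_le_jbracket y) (jbracket_nonneg y)

section Weighted

variable {H : Type*} [NormedAddCommGroup H]

noncomputable def weightedNorm (β : ℝ) (g : ℝ → H) (y : ℝ) : ℝ :=
  Real.exp (-β * jbracket y) * ‖g y‖

variable {β β' : ℝ} {g : ℝ → H} {y : ℝ}

lemma weightedNorm_nonneg : 0 ≤ weightedNorm β g y := by
  unfold weightedNorm; positivity

lemma weightedNorm_sq : weightedNorm β g y ^ 2 = Real.exp (-(2 * β) * jbracket y) * ‖g y‖ ^ 2 := by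
  rw [weightedNorm, mul_pow, ← Real.exp_nat_mul]
  ring_nf

lemma weightedNorm_mul_weightedNorm :
    weightedNorm β g y * weightedNorm β' g y = Real.exp (-(β + β') * jbracket y) * ‖g y‖ ^ 2 := by
  rw [weightedNorm, weightedNorm, neg_add, add_mul, Real.exp_add]
  ring

lemma weightedNorm_le_of_le (h : β ≤ β') : weightedNorm β' g y ≤ weightedNorm β g y :=
  mul_le_mul_of_nonneg_right (Real.exp_le_exp.2 (by nlinarith [jbracket_nonneg y])) (norm_nonneg _)

lemma continuous_weightedNorm (hg : Continuous g) : Continuous (weightedNorm β g) := by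
  unfold weightedNorm
  have := continuous_jbracket
  fun_prop

lemma memLp_weightedNorm (hg : Continuous g) {s : Set ℝ}
    (h : IntegrableOn (fun y => Real.exp (-(2 * β) * jbracket y) * ‖g y‖ ^ 2) s) :
    MemLp (weightedNorm β g) 2 (volume.restrict s) :=
  (memLp_two_iff_integrable_sq (continuous_weightedNorm hg).aestronglyMeasurable).2 <| by
    simp only [weightedNorm_sq]; exact h

end Weighted

section InnerProduct

variable {H : Type*} [NormedAddCommGroup H] [InnerProductSpace ℝ H]

lemma hasDerivAt_exp_mul_norm_sq {f : ℝ → H} {f' : H} {y : ℝ} (c : ℝ) (hf : HasDerivAt f f' y) :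
    HasDerivAt (fun t => Real.exp (-c * jbracket t) * ‖f t‖ ^ 2)
      (Real.exp (-c * jbracket y) * (-c * (y / jbracket y) * ‖f y‖ ^ 2 + 2 * ⟪f y, f'⟫)) y := by
  refine ((((hasDerivAt_jbracket y).const_mul (-c)).exp).mul hf.norm_sq).congr_deriv ?_
  ring

lemma abs_exp_mul_norm_sq_deriv_le {α α₂ : ℝ} (hc : 0 ≤ α + α₂) (f g : ℝ → H) (y : ℝ) :
    |Real.exp (-(α + α₂) * jbracket y) *
        (-(α + α₂) * (y / jbracket y) * ‖f y‖ ^ 2 + 2 * ⟪f y, g y⟫)| ≤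
      (α + α₂) * (weightedNorm α f y * weightedNorm α₂ f y) +
        2 * (weightedNorm α f y * weightedNorm α₂ g y) := by
  have hdrift : |-(α + α₂) * (y / jbracket y) * ‖f y‖ ^ 2| ≤ (α + α₂) * ‖f y‖ ^ 2 := by
    rw [abs_mul, abs_mul, abs_neg, abs_of_nonneg hc, abs_of_nonneg (sq_nonneg ‖f y‖)]
    exact mul_le_mul_of_nonneg_right
      (mul_le_of_le_one_right hc (abs_div_jbracket_le_one y)) (sq_nonneg _)
  have hinner : |2 * ⟪f y, g y⟫| ≤ 2 * (‖f y‖ * ‖g y‖) := by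
    rw [abs_mul, abs_two]
    gcongr
    exact abs_real_inner_le_norm _ _
  have hweights : Real.exp (-(α + α₂) * jbracket y) =
      Real.exp (-α * jbracket y) * Real.exp (-α₂ * jbracket y) := by
    rw [← Real.exp_add]; ring_nf
  calc _ = Real.exp (-(α + α₂) * jbracket y) *
        |-(α + α₂) * (y / jbracket y) * ‖f y‖ ^ 2 + 2 * ⟪f y, g y⟫| := by
        rw [abs_mul, abs_of_pos (Real.exp_pos _)]
    _ ≤ Real.exp (-(α + α₂) * jbracket y) * ((α + α₂) * ‖f y‖ ^ 2 + 2 * (‖f y‖ * ‖g y‖)) := by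
        gcongr
        exact (abs_add_le _ _).trans (add_le_add hdrift hinner)
    _ = _ := by rw [hweights, weightedNorm, weightedNorm, weightedNorm]; ring

theorem exp_mul_norm_sq_le_integral_Ioi {α α₂ : ℝ} (hc : 0 ≤ α + α₂) {f : ℝ → H}
    (hf : ContDiff ℝ 1 f) {x : ℝ}
    (hA : MemLp (weightedNorm α f) 2 (volume.restrict (Ioi x)))
    (hB : MemLp (weightedNorm α₂ (deriv f)) 2 (volume.restrict (Ioi x)))
    (hC : MemLp (weightedNorm α₂ f) 2 (volume.restrict (Ioi x))) :
    Real.exp (-(α + α₂) * jbracket x) * ‖f x‖ ^ 2 ≤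
      (α + α₂) * (∫ y in Ioi x, weightedNorm α f y * weightedNorm α₂ f y) +
        2 * ∫ y in Ioi x, weightedNorm α f y * weightedNorm α₂ (deriv f) y := by
  have hAC : IntegrableOn (fun y => weightedNorm α f y * weightedNorm α₂ f y) (Ioi x) :=
    hA.integrable_mul hC
  have hAB : IntegrableOn (fun y => weightedNorm α f y * weightedNorm α₂ (deriv f) y) (Ioi x) :=
    hA.integrable_mul hB
  have hderiv (y : ℝ) := hasDerivAt_exp_mul_norm_sq (α + α₂)
    (hf.differentiable one_ne_zero y).hasDerivAt
  calc _ ≤ ‖Real.exp (-(α + α₂) * jbracket x) * ‖f x‖ ^ 2‖ := le_abs_self _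
    _ ≤ ∫ y in Ioi x, (α + α₂) * (weightedNorm α f y * weightedNorm α₂ f y) +
          2 * (weightedNorm α f y * weightedNorm α₂ (deriv f) y) :=
        norm_le_integral_Ioi_of_hasDerivAt (fun y _ => hderiv y)
          (by simpa only [weightedNorm_mul_weightedNorm] using hAC)
          ((hAC.const_mul _).add (hAB.const_mul _))
          (fun y _ => abs_exp_mul_norm_sq_deriv_le hc f (deriv f) y)
    _ = _ := by rw [integral_add (hAC.const_mul _) (hAB.const_mul _), integral_const_mul,
          integral_const_mul]

theorem exp_mul_norm_sq_le_sqrt_integral_Ioi {α α₂ : ℝ} (hc : 0 ≤ α + α₂) {f : ℝ → H}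
    (hf : ContDiff ℝ 1 f) {x : ℝ}
    (hA : MemLp (weightedNorm α f) 2 (volume.restrict (Ioi x)))
    (hB : MemLp (weightedNorm α₂ (deriv f)) 2 (volume.restrict (Ioi x)))
    (hC : MemLp (weightedNorm α₂ f) 2 (volume.restrict (Ioi x))) :
    Real.exp (-(α + α₂) * jbracket x) * ‖f x‖ ^ 2 ≤
      (α + α₂) * (Real.sqrt (∫ y in Ioi x, Real.exp (-(2 * α) * jbracket y) * ‖f y‖ ^ 2) *
          Real.sqrt (∫ y in Ioi x, Real.exp (-(2 * α₂) * jbracket y) * ‖f y‖ ^ 2)) +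
        2 * (Real.sqrt (∫ y in Ioi x, Real.exp (-(2 * α) * jbracket y) * ‖f y‖ ^ 2) *
          Real.sqrt (∫ y in Ioi x, Real.exp (-(2 * α₂) * jbracket y) * ‖deriv f y‖ ^ 2)) := by
  have hnonneg {β : ℝ} {g : ℝ → H} : 0 ≤ᵐ[volume.restrict (Ioi x)] weightedNorm β g :=
    ae_of_all _ fun _ => weightedNorm_nonneg
  have hAC := integral_mul_le_sqrt_integral_sq_mul_sqrt_integral_sq hnonneg hnonneg hA hC
  have hAB := integral_mul_le_sqrt_integral_sq_mul_sqrt_integral_sq hnonneg hnonneg hA hB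
  simp only [weightedNorm_sq] at hAC hAB
  refine (exp_mul_norm_sq_le_integral_Ioi hc hf hA hB hC).trans (add_le_add ?_ ?_)
  · exact mul_le_mul_of_nonneg_left hAC hc
  · exact mul_le_mul_of_nonneg_left hAB two_pos.le

end InnerProduct

/-- **Weighted one-dimensional Sobolev pointwise bound.**
For `0 < α < α₂` and `f` C¹ with `e^{−α⟨·⟩}f ∈ L²` and `e^{−α₂⟨·⟩}f' ∈ L²`, one has
`e^{−2α₂⟨x⟩}‖f(x)‖² ≤ 2 e^{−(α₂−α)⟨x⟩} ‖e^{−α⟨·⟩}f‖_{L²(x,∞)}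
 (‖e^{−α₂⟨·⟩}f'‖_{L²(x,∞)} + α₂ ‖e^{−α₂⟨·⟩}f‖_{L²(x,∞)})` for every `x`. -/
theorem weighted_sobolev_pointwise
    {H : Type*} [NormedAddCommGroup H] [InnerProductSpace ℝ H]
    (α α₂ : ℝ) (hα : 0 < α) (hαα₂ : α < α₂)
    (f : ℝ → H) (hf : ContDiff ℝ 1 f)
    (hfL2 : Integrable (fun y : ℝ => Real.exp (-(2 * α) * jbracket y) * ‖f y‖ ^ 2))
    (hf'L2 : Integrable
      (fun y : ℝ => Real.exp (-(2 * α₂) * jbracket y) * ‖deriv f y‖ ^ 2)) :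
    ∀ x : ℝ,
      Real.exp (-(2 * α₂) * jbracket x) * ‖f x‖ ^ 2 ≤
        2 * Real.exp (-(α₂ - α) * jbracket x) *
          Real.sqrt (∫ y in Set.Ioi x, Real.exp (-(2 * α) * jbracket y) * ‖f y‖ ^ 2) *
          (Real.sqrt
              (∫ y in Set.Ioi x,
                Real.exp (-(2 * α₂) * jbracket y) * ‖deriv f y‖ ^ 2) +
            α₂ *
              Real.sqrt
                (∫ y in Set.Ioi x,
                  Real.exp (-(2 * α₂) * jbracket y) * ‖f y‖ ^ 2)) := by
  intro x
  have hA : MemLp (weightedNorm α f) 2 (volume.restrict (Ioi x)) :=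
    memLp_weightedNorm hf.continuous hfL2.integrableOn
  have hB : MemLp (weightedNorm α₂ (deriv f)) 2 (volume.restrict (Ioi x)) :=
    memLp_weightedNorm (hf.continuous_deriv le_rfl) hf'L2.integrableOn
  have hC : MemLp (weightedNorm α₂ f) 2 (volume.restrict (Ioi x)) :=
    hA.of_le (continuous_weightedNorm hf.continuous).aestronglyMeasurable <| ae_of_all _ fun y => by
      simpa only [Real.norm_of_nonneg weightedNorm_nonneg] using weightedNorm_le_of_le hαα₂.le
  have hkey := exp_mul_norm_sq_le_sqrt_integral_Ioi (by linarith) hf hA hB hC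
  have hweights : Real.exp (-(2 * α₂) * jbracket x) =
      Real.exp (-(α₂ - α) * jbracket x) * Real.exp (-(α + α₂) * jbracket x) := by
    rw [← Real.exp_add]; ring_nf
  set A := Real.sqrt (∫ y in Ioi x, Real.exp (-(2 * α) * jbracket y) * ‖f y‖ ^ 2)
  set B := Real.sqrt (∫ y in Ioi x, Real.exp (-(2 * α₂) * jbracket y) * ‖deriv f y‖ ^ 2)
  set C := Real.sqrt (∫ y in Ioi x, Real.exp (-(2 * α₂) * jbracket y) * ‖f y‖ ^ 2)
  have hAC : 0 ≤ A * C := mul_nonneg (Real.sqrt_nonneg _) (Real.sqrt_nonneg _)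
  calc _ = Real.exp (-(α₂ - α) * jbracket x) *
        (Real.exp (-(α + α₂) * jbracket x) * ‖f x‖ ^ 2) := by rw [hweights, mul_assoc]
    _ ≤ Real.exp (-(α₂ - α) * jbracket x) * (2 * A * (B + α₂ * C)) := by
        refine mul_le_mul_of_nonneg_left (hkey.trans ?_) (Real.exp_pos _).le
        nlinarith [mul_nonneg (sub_nonneg.2 hαα₂.le) hAC]
    _ = _ := by ring
end

section
/- Let δ > 0, Λ ≠ 0 and C₀ > 0, and let r : ℝ × ℝ → ℝ be continuously differentiable with |r(u, q)| ≤ C₀ (|u|³ + |u||q| + |q|²) for all (u, q). For q ∈ ℝ define F_q(u) := δ^{−1}(−q + Λ u²/2) + r(u, q). Then for every η ∈ (0, 1) there exists q₀ > 0 such that for all q with Λ q > 0 and |q| ≤ q₀ the following hold: F_q has a zero u₋ with Λ u₋ > 0 and a zero u₊ with Λ u₊ < 0, both satisfying (1−η)√(2q/Λ) ≤ |u_±| ≤ (1+η)√(2q/Λ); taking u₋ and u₊ to be respectively the zeros of F_q with Λu₋ > 0 and Λ u₊ < 0 closest to 0, there exists a C¹ solution u : ℝ → ℝ of u'(x) =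 F_q(u(x)) with u strictly between u₊ and u₋, with Λ u(x) strictly decreasing in x, and with u(x) → u₋ as x → −∞ and u(x) → u₊ as x → +∞. -/
/-!
For `Λ > 0` and small `q > 0` the remainder is at most `ηq/(2δ)` on `|u| ≤ 2√(2q/Λ)`, so `F_q` is
negative on `|u| ≤ (1-η)√(2q/Λ)` and positive at `|u| = (1+η)√(2q/Λ)`. The intermediate value
theorem gives the zeros `u₊ < 0 < u₋` closest to `0`, and `F_q < 0` between them. The profile is the
inverse of the time map `G(u) = ∫_c^u dv / F_q(v)`, which is strictly decreasing on `(u₊, u₋)`.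
Since `F_q` is Lipschitz and vanishes at `u±`, `|F_q(v)| ≤ L |v - u±|`, so `G` diverges
logarithmically at both ends and maps `(u₊, u₋)` onto `ℝ`. The case `Λ < 0` reduces to `Λ > 0`
through `(Λ, q, r, x) ↦ (-Λ, -q, -r(·, -·), -x)`, which turns `F_q` into `-F_q`.
-/

open Filter

/-- The fiber vector field `F_q(u) = δ⁻¹(−q + Λu²/2) + r(u,q)` of the approximate
Burgers flow on the one-dimensional fibers of the center manifold. -/
noncomputable def burgersField (δ Λ : ℝ) (r : ℝ → ℝ → ℝ) (q u : ℝ) : ℝ :=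
  δ⁻¹ * (-q + Λ * u ^ 2 / 2) + r u q

open Set Topology

theorem tendsto_integral_inv_nhdsGT_atTop {h : ℝ → ℝ} {a c L : ℝ} (hac : a < c)
    (hh : ContinuousOn h (Ioc a c)) (hpos : ∀ v ∈ Ioc a c, 0 < h v)
    (hle : ∀ v ∈ Ioc a c, h v ≤ L * (v - a)) :
    Tendsto (fun u => ∫ v in u..c, (h v)⁻¹) (𝓝[>] a) atTop := by
  have hc : c ∈ Ioc a c := ⟨hac, le_rfl⟩
  have hL : 0 < L := pos_of_mul_pos_left ((hpos c hc).trans_le (hle c hc)) (sub_pos.2 hac).le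
  have hlower : ∀ u ∈ Ioo a c,
      L⁻¹ * Real.log ((c - a) / (u - a)) ≤ ∫ v in u..c, (h v)⁻¹ := by
    intro u hu
    have hsub : Icc u c ⊆ Ioc a c := Icc_subset_Ioc hu.1 le_rfl
    calc L⁻¹ * Real.log ((c - a) / (u - a)) = ∫ v in u..c, (L * (v - a))⁻¹ := by
          simp_rw [mul_inv]
          rw [intervalIntegral.integral_const_mul,
            intervalIntegral.integral_comp_sub_right (fun x => x⁻¹),
            integral_inv_of_pos (sub_pos.2 hu.1) (sub_pos.2 hac)]
      _ ≤ ∫ v in u..c, (h v)⁻¹ := by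
        refine intervalIntegral.integral_mono_on hu.2.le ?_ ?_
          fun v hv => inv_anti₀ (hpos v (hsub hv)) (hle v (hsub hv))
        · refine ContinuousOn.intervalIntegrable_of_Icc hu.2.le (ContinuousOn.inv₀ (by fun_prop)
            fun v hv => (mul_pos hL (sub_pos.2 (hsub hv).1)).ne')
        · exact ((hh.mono hsub).inv₀ fun v hv => (hpos v (hsub hv)).ne').intervalIntegrable_of_Icc
            hu.2.le
  have hshift : Tendsto (fun u => u - a) (𝓝[>] a) (𝓝[>] 0) :=
    tendsto_nhdsWithin_of_tendsto_nhds_of_eventually_within _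
      (by simpa using ((continuous_sub_right a).tendsto a).mono_left nhdsWithin_le_nhds)
      (eventually_nhdsWithin_of_forall fun u hu => mem_Ioi.2 (sub_pos.2 hu))
  have hlog : Tendsto (fun u => L⁻¹ * Real.log ((c - a) / (u - a))) (𝓝[>] a) atTop := by
    simp_rw [div_eq_mul_inv]
    exact (Real.tendsto_log_atTop.comp ((tendsto_inv_nhdsGT_zero.comp hshift).const_mul_atTop
      (sub_pos.2 hac))).const_mul_atTop (inv_pos.2 hL)
  exact tendsto_atTop_mono' _ (eventually_of_mem (Ioo_mem_nhdsGT hac) hlower) hlog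

theorem tendsto_integral_inv_nhdsLT_atTop {h : ℝ → ℝ} {b c L : ℝ} (hcb : c < b)
    (hh : ContinuousOn h (Ico c b)) (hpos : ∀ v ∈ Ico c b, 0 < h v)
    (hle : ∀ v ∈ Ico c b, h v ≤ L * (b - v)) :
    Tendsto (fun u => ∫ v in c..u, (h v)⁻¹) (𝓝[<] b) atTop := by
  have hrefl : MapsTo (fun v => -v) (Ioc (-b) (-c)) (Ico c b) :=
    fun v hv => ⟨le_neg.1 hv.2, neg_lt.1 hv.1⟩
  have := tendsto_integral_inv_nhdsGT_atTop (h := fun v => h (-v)) (neg_lt_neg hcb)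
    (hh.comp continuous_neg.continuousOn hrefl) (fun v hv => hpos _ (hrefl hv))
    (fun v hv => by simpa [sub_eq_add_neg, add_comm] using hle _ (hrefl hv))
  refine (this.comp tendsto_neg_nhdsLT).congr fun u => ?_
  simp [intervalIntegral.integral_comp_neg (fun v => (h v)⁻¹)]

theorem exists_mem_Ioo_eq_of_tendsto {G : ℝ → ℝ} {a b : ℝ} (hab : a < b)
    (hG : ContinuousOn G (Ioo a b)) (ha : Tendsto G (𝓝[>] a) atTop)
    (hb : Tendsto G (𝓝[<] b) atBot) (x : ℝ) : ∃ u ∈ Ioo a b, G u = x := by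
  obtain ⟨c, hac, hcb⟩ := exists_between hab
  obtain ⟨u₁, hxu₁, hu₁⟩ := ((ha.eventually_gt_atTop x).and (Ioo_mem_nhdsGT hac)).exists
  obtain ⟨u₂, hxu₂, hu₂⟩ := ((hb.eventually_lt_atBot x).and (Ioo_mem_nhdsLT hcb)).exists
  have hsub : Icc u₁ u₂ ⊆ Ioo a b := Icc_subset_Ioo hu₁.1 hu₂.2
  obtain ⟨u, hu, hGu⟩ := intermediate_value_Icc' (hu₁.2.trans hu₂.1).le (hG.mono hsub)
    ⟨hxu₂.le, hxu₁.le⟩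
  exact ⟨u, hsub hu, hGu⟩

theorem exists_strictAnti_inverse_of_hasDerivAt {G g : ℝ → ℝ} {a b : ℝ} (hab : a < b)
    (hG : ∀ u ∈ Ioo a b, HasDerivAt G (g u) u) (hg : ∀ u ∈ Ioo a b, g u < 0)
    (ha : Tendsto G (𝓝[>] a) atTop) (hb : Tendsto G (𝓝[<] b) atBot) :
    ∃ U : ℝ → ℝ, (∀ x, HasDerivAt U (g (U x))⁻¹ x) ∧ (∀ x, U x ∈ Ioo a b) ∧ StrictAnti U ∧
      Tendsto U atBot (𝓝 b) ∧ Tendsto U atTop (𝓝 a) := by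
  have hGcont : ContinuousOn G (Ioo a b) := fun u hu => (hG u hu).continuousAt.continuousWithinAt
  have hGanti : StrictAntiOn G (Ioo a b) := strictAntiOn_of_deriv_neg (convex_Ioo a b) hGcont
    fun u hu => by rw [interior_Ioo] at hu; rw [(hG u hu).deriv]; exact hg u hu
  choose U hU hGU using exists_mem_Ioo_eq_of_tendsto hab hGcont ha hb
  have hUanti : StrictAnti U := fun x y hxy =>
    (hGanti.lt_iff_gt (hU x) (hU y)).1 (by rwa [hGU, hGU])
  have hrange : range U = Ioo a b := by
    refine (range_subset_iff.2 hU).antisymm fun w hw => ⟨G w, hGanti.injOn (hU _) hw (hGU _)⟩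
  have hUcont : Continuous U := by
    have hmono : Monotone (fun x => -U x) := fun x y hxy => neg_le_neg (hUanti.antitone hxy)
    have hnhds : ∀ x, (fun x => -U x) '' univ ∈ 𝓝 (-U x) := fun x => by
      refine mem_of_superset (Ioo_mem_nhds (neg_lt_neg (hU x).2) (neg_lt_neg (hU x).1))
        fun y hy => ?_
      obtain ⟨x', hx'⟩ : -y ∈ range U := hrange ▸ ⟨lt_neg_of_lt_neg hy.2, neg_lt.1 hy.1⟩
      exact ⟨x', trivial, by simp [hx']⟩
    have hneg : Continuous (fun x => -U x) := continuous_iff_continuousAt.2 fun x =>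
      continuousAt_of_monotoneOn_of_image_mem_nhds (hmono.monotoneOn univ) univ_mem (hnhds x)
    exact continuous_neg_iff.1 hneg
  refine ⟨U, fun x => ?_, hU, hUanti, ?_, ?_⟩
  · exact HasDerivAt.of_local_left_inverse hUcont.continuousAt (hG _ (hU x)) (hg _ (hU x)).ne
      (Eventually.of_forall hGU)
  · have := tendsto_atBot_ciSup hUanti.antitone (hrange ▸ bddAbove_Ioo)
    rwa [iSup, hrange, csSup_Ioo hab] at this
  · have := tendsto_atTop_ciInf hUanti.antitone (hrange ▸ bddBelow_Ioo)
    rwa [iInf, hrange, csInf_Ioo hab] at this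

theorem LipschitzOnWith.neg_le_mul_abs_sub {F : ℝ → ℝ} {K : NNReal} {s : Set ℝ}
    (hF : LipschitzOnWith K F s) {x y : ℝ} (hx : x ∈ s) (hy : y ∈ s) (hFy : F y = 0) :
    -F x ≤ K * |x - y| := by
  calc -F x ≤ dist (F x) (F y) := by rw [hFy, Real.dist_eq, sub_zero]; exact neg_le_abs _
    _ ≤ K * |x - y| := hF.dist_le_mul x hx y hy

theorem exists_heteroclinic_of_lipschitzOnWith {F : ℝ → ℝ} {a b : ℝ} {K : NNReal} (hab : a < b)
    (hF : LipschitzOnWith K F (Icc a b)) (ha : F a = 0) (hb : F b = 0)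
    (hneg : ∀ v ∈ Ioo a b, F v < 0) :
    ∃ u : ℝ → ℝ, (∀ x, HasDerivAt u (F (u x)) x) ∧ (∀ x, u x ∈ Ioo a b) ∧ StrictAnti u ∧
      Tendsto u atBot (𝓝 b) ∧ Tendsto u atTop (𝓝 a) := by
  obtain ⟨c, hac, hcb⟩ := exists_between hab
  have hFcont : ContinuousOn F (Icc a b) := hF.continuousOn
  have hgcont : ContinuousOn (fun v => (F v)⁻¹) (Ioo a b) :=
    (hFcont.mono Ioo_subset_Icc_self).inv₀ fun v hv => (hneg v hv).ne
  have hG : ∀ u ∈ Ioo a b, HasDerivAt (fun u => ∫ v in c..u, (F v)⁻¹) (F u)⁻¹ u := fun u hu =>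
    intervalIntegral.integral_hasDerivAt_right
      (hgcont.mono (ordConnected_Ioo.uIcc_subset ⟨hac, hcb⟩ hu)).intervalIntegrable
      (hgcont.stronglyMeasurableAtFilter isOpen_Ioo u hu)
      (hgcont.continuousAt (Ioo_mem_nhds hu.1 hu.2))
  have hGa : Tendsto (fun u => ∫ v in c..u, (F v)⁻¹) (𝓝[>] a) atTop := by
    have := tendsto_integral_inv_nhdsGT_atTop (h := fun v => -F v) (L := K) hac
      (hFcont.mono (Ioc_subset_Icc_self.trans (Icc_subset_Icc_right hcb.le))).neg
      (fun v hv => neg_pos.2 (hneg v ⟨hv.1, hv.2.trans_lt hcb⟩))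
      (fun v hv => by
        simpa [abs_of_pos (sub_pos.2 hv.1)] using
          hF.neg_le_mul_abs_sub ⟨hv.1.le, hv.2.trans hcb.le⟩ (left_mem_Icc.2 hab.le) ha)
    refine this.congr fun u => ?_
    rw [intervalIntegral.integral_symm, ← intervalIntegral.integral_neg]
    simp_rw [inv_neg, neg_neg]
  have hGb : Tendsto (fun u => ∫ v in c..u, (F v)⁻¹) (𝓝[<] b) atBot := by
    have := tendsto_integral_inv_nhdsLT_atTop (h := fun v => -F v) (L := K) hcb
      (hFcont.mono (Ico_subset_Icc_self.trans (Icc_subset_Icc_left hac.le))).neg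
      (fun v hv => neg_pos.2 (hneg v ⟨hac.trans_le hv.1, hv.2⟩))
      (fun v hv => by
        simpa [abs_sub_comm v, abs_of_pos (sub_pos.2 hv.2)] using
          hF.neg_le_mul_abs_sub ⟨hac.le.trans hv.1, hv.2.le⟩ (right_mem_Icc.2 hab.le) hb)
    refine (tendsto_neg_atTop_atBot.comp this).congr fun u => ?_
    simp_rw [Function.comp_apply, inv_neg, intervalIntegral.integral_neg, neg_neg]
  obtain ⟨u, hu, hmem, hanti, hbot, htop⟩ :=
    exists_strictAnti_inverse_of_hasDerivAt hab hG (fun v hv => inv_lt_zero.2 (hneg v hv)) hGa hGb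
  exact ⟨u, fun x => by simpa using hu x, hmem, hanti, hbot, htop⟩

theorem exists_first_pos_zero {f : ℝ → ℝ} (hf : Continuous f) {α β : ℝ} (hα : 0 ≤ α)
    (hβ : 0 ≤ β) (hneg : ∀ v ∈ Icc 0 α, f v < 0) (hfβ : 0 < f β) :
    ∃ z ∈ Ioc α β, f z = 0 ∧ ∀ v ∈ Ico 0 z, f v < 0 := by
  have hzero : ∀ w, 0 ≤ w → 0 ≤ f w → ∃ z ∈ Icc 0 w, f z = 0 := fun w hw hfw =>
    intermediate_value_Icc hw hf.continuousOn ⟨(hneg 0 ⟨le_rfl, hα⟩).le, hfw⟩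
  obtain ⟨z, ⟨hz, hfz⟩, hmin⟩ :=
    (isCompact_Icc.inter_right (isClosed_singleton.preimage hf)).exists_isLeast
      (hzero β hβ hfβ.le)
  have hbelow : ∀ v ∈ Ico 0 z, f v < 0 := fun v hv => by
    by_contra! hfv
    obtain ⟨w, hw, hfw⟩ := hzero v hv.1 hfv
    exact (hw.2.trans_lt hv.2).not_ge (hmin ⟨⟨hw.1, hw.2.trans (hv.2.le.trans hz.2)⟩, hfw⟩)
  exact ⟨z, ⟨lt_of_not_ge fun hzα => (hneg z ⟨hz.1, hzα⟩).ne hfz, hz.2⟩, hfz, hbelow⟩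

def HasShockConnection (δ Λ : ℝ) (r : ℝ → ℝ → ℝ) (η q : ℝ) : Prop :=
  ∃ um up : ℝ,
    (burgersField δ Λ r q um = 0 ∧ 0 < Λ * um ∧
      (1 - η) * √(2 * q / Λ) ≤ |um| ∧
      |um| ≤ (1 + η) * √(2 * q / Λ) ∧
      (∀ z : ℝ, burgersField δ Λ r q z = 0 → 0 < Λ * z → |um| ≤ |z|)) ∧
    (burgersField δ Λ r q up = 0 ∧ Λ * up < 0 ∧
      (1 - η) * √(2 * q / Λ) ≤ |up| ∧
      |up| ≤ (1 + η) * √(2 * q / Λ) ∧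
      (∀ z : ℝ, burgersField δ Λ r q z = 0 → Λ * z < 0 → |up| ≤ |z|)) ∧
    ∃ u : ℝ → ℝ,
      (∀ x : ℝ, HasDerivAt u (burgersField δ Λ r q (u x)) x) ∧
      (∀ x : ℝ, min um up < u x ∧ u x < max um up) ∧
      StrictAnti (fun x : ℝ => Λ * u x) ∧
      Tendsto u atBot (𝓝 um) ∧ Tendsto u atTop (𝓝 up)

section Burgers

variable {δ Λ C₀ : ℝ} {r : ℝ → ℝ → ℝ}

theorem contDiff_burgersField {n : WithTop ℕ∞} (hr : ContDiff ℝ n (Function.uncurry r)) (q : ℝ) :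
    ContDiff ℝ n (burgersField δ Λ r q) :=
  (by fun_prop : ContDiff ℝ n fun u : ℝ => δ⁻¹ * (-q + Λ * u ^ 2 / 2)).add
    (hr.comp (contDiff_id.prodMk contDiff_const))

theorem abs_remainder_le (hΛ : 0 < Λ) (hC₀ : 0 ≤ C₀)
    (hrbd : ∀ u q : ℝ, |r u q| ≤ C₀ * (|u| ^ 3 + |u| * |q| + |q| ^ 2)) {q ε u : ℝ} (hq : 0 < q)
    (hqε : q ≤ ε) (hsε : √(2 * q / Λ) ≤ ε) (hu : |u| ≤ 2 * √(2 * q / Λ)) :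
    |r u q| ≤ C₀ * (16 / Λ + 3) * ε * q := by
  set s := √(2 * q / Λ)
  have hcube : |u| ^ 3 ≤ 16 / Λ * ε * q := calc
    |u| ^ 3 ≤ (2 * s) ^ 3 := pow_le_pow_left₀ (abs_nonneg u) hu 3
    _ = 16 / Λ * s * q := by
      rw [show (2 * s) ^ 3 = 8 * s * s ^ 2 by ring, Real.sq_sqrt (by positivity)]
      field_simp; ring
    _ ≤ 16 / Λ * ε * q := by gcongr
  have hlin : |u| * q ≤ 2 * ε * q := by gcongr; exact hu.trans (by gcongr)
  calc |r u q| ≤ C₀ * (|u| ^ 3 + |u| * |q| + |q| ^ 2) := hrbd u q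
    _ ≤ C₀ * (16 / Λ * ε * q + 2 * ε * q + ε * q) := by
      rw [abs_of_pos hq]; gcongr; nlinarith
    _ = C₀ * (16 / Λ + 3) * ε * q := by ring

theorem burgersField_neg_of_abs_le (hδ : 0 < δ) (hΛ : 0 < Λ) {q η u : ℝ} (hq : 0 < q)
    (hη : 0 < η) (hη1 : η < 1)
    (hsmall : ∀ u, |u| ≤ 2 * √(2 * q / Λ) → |r u q| ≤ η * q / (2 * δ))
    (hu : |u| ≤ (1 - η) * √(2 * q / Λ)) : burgersField δ Λ r q u < 0 := by
  set s := √(2 * q / Λ)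
  have hs : Λ * s ^ 2 = 2 * q := by rw [Real.sq_sqrt (by positivity)]; field_simp
  have hu2 : Λ * u ^ 2 ≤ (1 - η) ^ 2 * (2 * q) := by
    rw [← sq_abs, ← hs, mul_left_comm, ← mul_pow]
    gcongr
  have hquad : -q + Λ * u ^ 2 / 2 ≤ -(η * q) := by
    nlinarith [mul_pos (mul_pos hη (sub_pos.2 hη1)) hq]
  have hr : r u q ≤ η * q / (2 * δ) :=
    (le_abs_self _).trans (hsmall u (hu.trans (by nlinarith [Real.sqrt_nonneg (2 * q / Λ)])))
  calc burgersField δ Λ r q u ≤ δ⁻¹ * -(η * q) + η * q / (2 * δ) :=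
        add_le_add (mul_le_mul_of_nonneg_left hquad (inv_nonneg.2 hδ.le)) hr
    _ = -(η * q / (2 * δ)) := by field_simp; ring
    _ < 0 := neg_neg_of_pos (by positivity)

theorem burgersField_pos_of_abs_eq (hδ : 0 < δ) (hΛ : 0 < Λ) {q η u : ℝ} (hq : 0 < q)
    (hη : 0 < η) (hη1 : η ≤ 1)
    (hsmall : ∀ u, |u| ≤ 2 * √(2 * q / Λ) → |r u q| ≤ η * q / (2 * δ))
    (hu : |u| = (1 + η) * √(2 * q / Λ)) : 0 < burgersField δ Λ r q u := by
  set s := √(2 * q / Λ)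
  have hs : Λ * s ^ 2 = 2 * q := by rw [Real.sq_sqrt (by positivity)]; field_simp
  have hu2 : Λ * u ^ 2 = (1 + η) ^ 2 * (2 * q) := by rw [← sq_abs, hu, ← hs]; ring
  have hquad : 2 * (η * q) ≤ -q + Λ * u ^ 2 / 2 := by nlinarith [mul_pos (mul_pos hη hη) hq]
  have hr : -(η * q / (2 * δ)) ≤ r u q :=
    neg_le_of_abs_le (hsmall u (hu.le.trans (by nlinarith [Real.sqrt_nonneg (2 * q / Λ)])))
  calc 0 < 3 * (η * q / (2 * δ)) := by positivity
    _ = δ⁻¹ * (2 * (η * q)) - η * q / (2 * δ) := by field_simp; ring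
    _ ≤ burgersField δ Λ r q u :=
        add_le_add (mul_le_mul_of_nonneg_left hquad (inv_nonneg.2 hδ.le)) hr

theorem hasShockConnection_of_remainder_small (hδ : 0 < δ) (hΛ : 0 < Λ)
    (hr : ContDiff ℝ 1 (Function.uncurry r)) {η q : ℝ} (hη : 0 < η) (hη1 : η < 1) (hq : 0 < q)
    (hsmall : ∀ u, |u| ≤ 2 * √(2 * q / Λ) → |r u q| ≤ η * q / (2 * δ)) :
    HasShockConnection δ Λ r η q := by
  set s := √(2 * q / Λ)
  have hs : 0 < s := Real.sqrt_pos.2 (by positivity)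
  set F := burgersField δ Λ r q
  have hF : ContDiff ℝ 1 F := contDiff_burgersField hr q
  have hneg : ∀ v, |v| ≤ (1 - η) * s → F v < 0 := fun v =>
    burgersField_neg_of_abs_le hδ hΛ hq hη hη1 hsmall
  have hpos : ∀ v, |v| = (1 + η) * s → 0 < F v := fun v =>
    burgersField_pos_of_abs_eq hδ hΛ hq hη hη1.le hsmall
  have hα : 0 ≤ (1 - η) * s := by nlinarith
  have hβ : 0 ≤ (1 + η) * s := by nlinarith
  obtain ⟨zp, hzp, hFzp, hbelowp⟩ := exists_first_pos_zero hF.continuous hα hβ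
    (fun v hv => hneg v (by rw [abs_of_nonneg hv.1]; exact hv.2)) (hpos _ (abs_of_nonneg hβ))
  obtain ⟨zn, hzn, hFzn, hbelown⟩ := exists_first_pos_zero (hF.continuous.comp continuous_neg)
    hα hβ (fun v hv => hneg (-v) (by rw [abs_neg, abs_of_nonneg hv.1]; exact hv.2))
    (hpos _ (by rw [abs_neg, abs_of_nonneg hβ]))
  have hzp0 : 0 < zp := hα.trans_lt hzp.1
  have hzn0 : 0 < zn := hα.trans_lt hzn.1
  have hbetween : ∀ v ∈ Ioo (-zn) zp, F v < 0 := fun v hv => by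
    rcases le_or_gt 0 v with h | h
    · exact hbelowp v ⟨h, hv.2⟩
    · simpa using hbelown (-v) ⟨by linarith, by linarith [hv.1]⟩
  obtain ⟨K, hK⟩ := hF.contDiffOn.exists_lipschitzOnWith one_ne_zero (convex_Icc (-zn) zp)
    isCompact_Icc
  obtain ⟨u, hu, hmem, hanti, hbot, htop⟩ :=
    exists_heteroclinic_of_lipschitzOnWith (by linarith) hK hFzn hFzp hbetween
  refine ⟨zp, -zn, ⟨hFzp, mul_pos hΛ hzp0, ?_, ?_, fun z hFz hz => ?_⟩,
    ⟨hFzn, by nlinarith, ?_, ?_, fun z hFz hz => ?_⟩, u, hu, fun x => ?_,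
    fun x y hxy => mul_lt_mul_of_pos_left (hanti hxy) hΛ, hbot, htop⟩
  · rw [abs_of_pos hzp0]; exact hzp.1.le
  · rw [abs_of_pos hzp0]; exact hzp.2
  · have hz0 : 0 < z := pos_of_mul_pos_right hz hΛ.le
    rw [abs_of_pos hzp0, abs_of_pos hz0]
    exact not_lt.1 fun h => (hbelowp z ⟨hz0.le, h⟩).ne hFz
  · rw [abs_neg, abs_of_pos hzn0]; exact hzn.1.le
  · rw [abs_neg, abs_of_pos hzn0]; exact hzn.2
  · have hz0 : z < 0 := neg_of_mul_neg_right hz hΛ.le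
    rw [abs_neg, abs_of_pos hzn0, abs_of_neg hz0]
    exact not_lt.1 fun h => (hbelown (-z) ⟨by linarith, h⟩).ne (by simpa using hFz)
  · rw [min_eq_right (by linarith), max_eq_left (by linarith)]
    exact hmem x

theorem exists_hasShockConnection (hδ : 0 < δ) (hΛ : 0 < Λ) (hC₀ : 0 < C₀)
    (hr : ContDiff ℝ 1 (Function.uncurry r))
    (hrbd : ∀ u q : ℝ, |r u q| ≤ C₀ * (|u| ^ 3 + |u| * |q| + |q| ^ 2)) {η : ℝ} (hη : 0 < η)
    (hη1 : η < 1) : ∃ q₀ > 0, ∀ q, 0 < q → q ≤ q₀ → HasShockConnection δ Λ r η q := by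
  set ε := η / (2 * δ * (C₀ * (16 / Λ + 3))) with hε_def
  have hε : 0 < ε := by positivity
  refine ⟨min ε (Λ * ε ^ 2 / 2), by positivity, fun q hq hq₀ => ?_⟩
  have hsε : √(2 * q / Λ) ≤ ε := by
    refine (Real.sqrt_le_sqrt ?_).trans_eq (Real.sqrt_sq hε.le)
    rw [div_le_iff₀ hΛ]
    linarith [hq₀.trans (min_le_right _ _)]
  refine hasShockConnection_of_remainder_small hδ hΛ hr hη hη1 hq fun u hu => ?_
  calc |r u q| ≤ C₀ * (16 / Λ + 3) * ε * q :=
        abs_remainder_le hΛ hC₀.le hrbd hq (hq₀.trans (min_le_left _ _)) hsε hu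
    _ = η * q / (2 * δ) := by rw [hε_def]; field_simp

end Burgers

theorem HasShockConnection.of_neg {δ Λ η q : ℝ} {r : ℝ → ℝ → ℝ}
    (h : HasShockConnection δ (-Λ) (fun u p => -r u (-p)) η (-q)) :
    HasShockConnection δ Λ r η q := by
  have hF : burgersField δ (-Λ) (fun u p => -r u (-p)) (-q) = -burgersField δ Λ r q := by
    funext u; simp only [burgersField, Pi.neg_apply, neg_neg]; ring
  have hs : 2 * -q / -Λ = 2 * q / Λ := by rw [mul_neg, neg_div_neg_eq]
  obtain ⟨um, up, hum, hup, u, hu, hbtw, hanti, hbot, htop⟩ := h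
  simp only [hF, hs, Pi.neg_apply, neg_eq_zero, neg_mul, neg_pos, neg_lt_zero]
    at hum hup hu hanti
  have hrev : ∀ x, HasDerivAt (fun x => u (-x)) (burgersField δ Λ r q (u (-x))) x := fun x => by
    have := (hu (-x)).comp x (hasDerivAt_neg x)
    rwa [mul_neg_one, neg_neg] at this
  refine ⟨up, um, hup, hum, fun x => u (-x), hrev,
    fun x => by simpa only [min_comm, max_comm] using hbtw (-x),
    fun x y hxy => neg_lt_neg_iff.1 (hanti (neg_lt_neg hxy)),
    htop.comp tendsto_neg_atBot_atTop, hbot.comp tendsto_neg_atTop_atBot⟩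

/-- **Existence of small-amplitude heteroclinic (Lax shock) connections (Lemma 5.1).**
For the approximate Burgers flow `u' = δ⁻¹(−q + Λu²/2) + O(|u|³ + |u||q| + |q|²)` with
`δ > 0`, `Λ ≠ 0` and `Λq > 0` small, there are zeros `u∓` of the field with
`(1∓η)√(2q/Λ) ≤ |u∓| ≤ (1+η)√(2q/Λ)`, and, taking the zeros of each sign closest to `0`,
a heteroclinic solution strictly between them, with `Λu` strictly decreasing, connecting
`u₋` at `−∞` to `u₊` at `+∞`. -/
theorem small_amplitude_shock_connections
    (δ Λ C₀ : ℝ) (hδ : 0 < δ) (hΛ : Λ ≠ 0) (hC₀ : 0 < C₀)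
    (r : ℝ → ℝ → ℝ) (hr : ContDiff ℝ 1 (Function.uncurry r))
    (hrbd : ∀ u q : ℝ, |r u q| ≤ C₀ * (|u| ^ 3 + |u| * |q| + |q| ^ 2)) :
    ∀ η : ℝ, 0 < η → η < 1 →
      ∃ q₀ : ℝ, 0 < q₀ ∧
        ∀ q : ℝ, 0 < Λ * q → |q| ≤ q₀ →
          ∃ um up : ℝ,
            (burgersField δ Λ r q um = 0 ∧ 0 < Λ * um ∧
              (1 - η) * Real.sqrt (2 * q / Λ) ≤ |um| ∧
              |um| ≤ (1 + η) * Real.sqrt (2 * q / Λ) ∧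
              (∀ z : ℝ, burgersField δ Λ r q z = 0 → 0 < Λ * z → |um| ≤ |z|)) ∧
            (burgersField δ Λ r q up = 0 ∧ Λ * up < 0 ∧
              (1 - η) * Real.sqrt (2 * q / Λ) ≤ |up| ∧
              |up| ≤ (1 + η) * Real.sqrt (2 * q / Λ) ∧
              (∀ z : ℝ, burgersField δ Λ r q z = 0 → Λ * z < 0 → |up| ≤ |z|)) ∧
            ∃ u : ℝ → ℝ,
              (∀ x : ℝ, HasDerivAt u (burgersField δ Λ r q (u x)) x) ∧
              (∀ x : ℝ, min um up < u x ∧ u x < max um up) ∧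
              StrictAnti (fun x : ℝ => Λ * u x) ∧
              Tendsto u atBot (nhds um) ∧ Tendsto u atTop (nhds up) := by
  intro η hη hη1
  rcases hΛ.lt_or_gt with hΛ | hΛ
  · have hr' : ContDiff ℝ 1 (Function.uncurry fun u p => -r u (-p)) :=
      (hr.comp (contDiff_fst.prodMk contDiff_snd.neg)).neg
    obtain ⟨q₀, hq₀, h⟩ := exists_hasShockConnection hδ (neg_pos.2 hΛ) hC₀ hr'
      (fun u p => by simpa using hrbd u (-p)) hη hη1
    exact ⟨q₀, hq₀, fun q hΛq hq => (h (-q) (neg_pos.2 (neg_of_mul_pos_right hΛq hΛ.le))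
      ((neg_le_abs q).trans hq)).of_neg⟩
  · obtain ⟨q₀, hq₀, h⟩ := exists_hasShockConnection hδ hΛ hC₀ hr hrbd hη hη1
    exact ⟨q₀, hq₀, fun q hΛq hq =>
      h q (pos_of_mul_pos_right hΛq hΛ.le) ((le_abs_self q).trans hq)⟩
end
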